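/- arXiv:1610.09541 — 9 statements merged into one kernel-verified Lean document; each statement's English description precedes it below -/
import Mathlib

section
/- If a prime p divides all but one of the integers a₁,…,aₘ, then the quadratic form a₁X₁² + ⋯ + aₘXₘ² is not universal over M₂(ℤ): there exists a 2×2 integer matrix not representable as a₁A₁² + ⋯ + aₘAₘ² with Aᵢ ∈ M₂(ℤ). -/
lemma aux_sq_zero {F : Type*} [Field F] (B : Matrix (Fin 2) (Fin 2) F)
    (h : B ^ 4 = 0) : B ^ 2 = 0 := by
  have hdet : B.det = 0 := by
    have h4 : (B.det) ^ 4 = 0 := by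
      rw [← Matrix.det_pow, h]; simp
    exact pow_eq_zero_iff (by norm_num) |>.mp h4
  have hch : B ^ 2 = B.trace • B := by
    have : B ^ 2 = B.trace • B - B.det • 1 := by
      ext i j
      fin_cases i <;> fin_cases j <;>
        simp [pow_two, Matrix.mul_apply, Fin.sum_univ_two, Matrix.trace_fin_two,
          Matrix.det_fin_two, Matrix.one_apply] <;> ring
    rw [this, hdet, zero_smul, sub_zero]
  have e : B ^ 4 = B.trace ^ 3 • B := by
    have h42 : B ^ 4 = (B ^ 2) ^ 2 := by rw [← pow_mul]
    rw [h42, hch, smul_pow, hch, smul_smul,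
      show B.trace ^ 2 * B.trace = B.trace ^ 3 by ring]
  rcases eq_or_ne B.trace 0 with ht | ht
  · rw [hch, ht, zero_smul]
  · have hB : B = 0 := by
      have := e ▸ h
      rcases smul_eq_zero.mp this.symm.symm with h1 | h1
      · exact absurd (pow_eq_zero_iff (by norm_num) |>.mp h1) ht
      · exact h1
    rw [hch, hB, smul_zero]

theorem stmt3 (m : ℕ) (a : Fin m → ℤ) (p : ℕ) (hp : p.Prime)
    (h : ∃ j, ∀ i, i ≠ j → (p : ℤ) ∣ a i) :
    ∃ M : Matrix (Fin 2) (Fin 2) ℤ,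
      ¬ ∃ A : Fin m → Matrix (Fin 2) (Fin 2) ℤ, M = ∑ i, a i • (A i) ^ 2 := by
  haveI := Fact.mk hp
  obtain ⟨j, hj⟩ := h
  refine ⟨!![0,1;0,0], ?_⟩
  rintro ⟨A, hA⟩
  set f : Matrix (Fin 2) (Fin 2) ℤ →+* Matrix (Fin 2) (Fin 2) (ZMod p) := (Int.castRingHom (ZMod p)).mapMatrix with hf
  have hmap : f !![0,1;0,0] = ∑ i, (a i : ZMod p) • (f (A i)) ^ 2 := by
    rw [hA, map_sum f (fun i => a i • A i ^ 2) Finset.univ]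
    refine Finset.sum_congr rfl fun i _ => ?_
    rw [map_zsmul, map_pow, Int.cast_smul_eq_zsmul]
  have hsum : f !![0,1;0,0] = (a j : ZMod p) • (f (A j)) ^ 2 := by
    rw [hmap]
    refine Finset.sum_eq_single j (fun i _ hij => ?_) (fun hj' => absurd (Finset.mem_univ j) hj')
    rw [(ZMod.intCast_zmod_eq_zero_iff_dvd _ _).mpr (hj i hij), zero_smul]
  have hfM : f !![0,1;0,0] = (!![0,1;0,0] : Matrix (Fin 2) (Fin 2) (ZMod p)) := by
    ext i k
    fin_cases i <;> fin_cases k <;> simp [hf]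
  have hne : (!![0,1;0,0] : Matrix (Fin 2) (Fin 2) (ZMod p)) ≠ 0 := by
    intro h0
    have := congrFun (congrFun h0 0) 1
    simp at this
  have hM2 : (!![0,1;0,0] : Matrix (Fin 2) (Fin 2) (ZMod p)) ^ 2 = 0 := by
    ext i k
    fin_cases i <;> fin_cases k <;>
      simp [pow_two, Matrix.mul_apply, Fin.sum_univ_two]
  rw [hfM] at hsum
  rcases eq_or_ne ((a j : ZMod p)) 0 with hc | hc
  · rw [hc, zero_smul] at hsum
    exact hne hsum
  · set B := f (A j)
    have h4 : (a j : ZMod p) ^ 2 • B ^ 4 = 0 := by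
      have : ((a j : ZMod p) • B ^ 2) ^ 2 = 0 := by rw [← hsum, hM2]
      rw [smul_pow] at this
      rw [show B ^ 4 = (B ^ 2) ^ 2 by rw [← pow_mul]]
      exact this
    have hB4 : B ^ 4 = 0 := by
      rcases smul_eq_zero.mp h4 with h1 | h1
      · exact absurd (pow_eq_zero_iff (by norm_num) |>.mp h1) hc
      · exact h1
    have := aux_sq_zero B hB4
    rw [this, smul_zero] at hsum
    exact hne hsum
end

section
/- If all but two of the integers a₁,…,aₘ are divisible by 4, then the quadratic form a₁X₁² + ⋯ + aₘXₘ² is not universal over M₂(ℤ). -/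
abbrev R4 := ZMod 4
abbrev M2 := Matrix (Fin 2) (Fin 2) R4

-- tiny decidable facts
lemma parA (a d p s : R4) (h : a*a - d*d + p*p - s*s = 2) :
    2*(a+d) = 2 ∧ 2*(p+s) = 2 := by revert a d p s; decide
lemma parB (a d : R4) (h : 2*(a+d) = 2) : a*a + d*d = 1 := by revert a d; decide
lemma parOF (c t : R4) (h : 2*(c*t) = 2) : 2*t = 2 := by revert c t; decide
lemma r4_two_ne_zero : (2 : R4) ≠ 0 := by decide
lemma h40 : (4 : R4) = 0 := by decide

lemma sum_sq (e1 e2 : R4) (h1 : e1 + e2 = 0) (h2 : e1 - e2 = 2)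
    (X Y : M2) : X^2 + Y^2 ≠ !![e1, 0; 0, e2] := by
  intro heq
  have hE : ∀ i j, (X^2 + Y^2) i j = !![e1, 0; 0, e2] i j := fun i j => by rw [heq]
  have E11 := hE 0 0
  have E12 := hE 0 1
  have E21 := hE 1 0
  have E22 := hE 1 1
  simp [pow_two, Matrix.mul_apply, Fin.sum_univ_two, Matrix.add_apply] at E11 E12 E21 E22
  set a := X 0 0; set b := X 0 1; set c := X 1 0; set d := X 1 1
  set p := Y 0 0; set q := Y 0 1; set r := Y 1 0; set s := Y 1 1
  have hA : a*a - d*d + p*p - s*s = 2 := by linear_combination E11 - E22 + h2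
  obtain ⟨ht, hu⟩ := parA a d p s hA
  have hBx : a*a + d*d = 1 := parB a d ht
  have hBy : p*p + s*s = 1 := parB p s hu
  have h4 : 2*(b*c) + 2*(q*r) = 2 := by
    linear_combination E11 + E22 + h1 - hBx - hBy - h40
  have h5 : 2*b + 2*q = 0 := by linear_combination 2*E12 - b*ht - q*hu
  have h6 : 2*c + 2*r = 0 := by linear_combination 2*E21 - c*ht - r*hu
  have hz : (2 : R4) = 0 := by linear_combination h4 - c*h5 - q*h6 + (1 + c*q)*h40
  exact r4_two_ne_zero hz

lemma diff_sq (X Y : M2) : X^2 + (3:R4)•Y^2 ≠ !![0, 0; 0, 2] := by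
  intro heq
  have hE : ∀ i j, (X^2 + (3:R4)•Y^2) i j = !![(0:R4), 0; 0, 2] i j := fun i j => by rw [heq]
  have E11 := hE 0 0
  have E12 := hE 0 1
  have E21 := hE 1 0
  have E22 := hE 1 1
  simp [pow_two, Matrix.mul_apply, Fin.sum_univ_two, Matrix.add_apply, Matrix.smul_apply,
    smul_eq_mul] at E11 E12 E21 E22
  set a := X 0 0; set b := X 0 1; set c := X 1 0; set d := X 1 1
  set p := Y 0 0; set q := Y 0 1; set r := Y 1 0; set s := Y 1 1
  have hA : a*a - d*d + s*s - p*p = 2 := by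
    linear_combination E11 - E22 + (s*s - p*p - 1)*h40
  obtain ⟨ht, hu2⟩ := parA a d s p hA
  have hu : 2*(p+s) = 2 := by linear_combination hu2
  have hBx : a*a + d*d = 1 := parB a d ht
  have hBy : p*p + s*s = 1 := parB p s hu
  have h4 : 2*(b*c) + 2*(q*r) = 2 := by
    linear_combination E11 + E22 - hBx - 3*hBy - (q*r+1)*h40
  have h5 : 2*b + 2*q = 0 := by linear_combination 2*E12 - b*ht - 3*q*hu - q*h40
  have h6 : 2*c + 2*r = 0 := by linear_combination 2*E21 - c*ht - 3*r*hu - r*h40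
  have hz : (2 : R4) = 0 := by linear_combination h4 - c*h5 - q*h6 + (1 + c*q)*h40
  exact r4_two_ne_zero hz

lemma one_odd (α β : R4) (hα : 2*α = 2) (hβ : 2*β = 0) (X Y : M2) :
    α•X^2 + β•Y^2 ≠ !![0, 0; 1, 0] := by
  intro heq
  have hE : ∀ i j, (α•X^2 + β•Y^2) i j = !![(0:R4), 0; 1, 0] i j := fun i j => by rw [heq]
  have E11 := hE 0 0
  have E21 := hE 1 0
  have E22 := hE 1 1
  simp [pow_two, Matrix.mul_apply, Fin.sum_univ_two, Matrix.add_apply, Matrix.smul_apply,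
    smul_eq_mul] at E11 E21 E22
  set a := X 0 0; set b := X 0 1; set c := X 1 0; set d := X 1 1
  set p := Y 0 0; set q := Y 0 1; set r := Y 1 0; set s := Y 1 1
  have hct : 2*(c*(a+d)) = 2 := by
    linear_combination 2*E21 - (c*a+d*c)*hα - (r*p+s*r)*hβ
  have ht : 2*(a+d) = 2 := parOF c (a+d) hct
  have hBx : a*a + d*d = 1 := parB a d ht
  have hz : (2 : R4) = 0 := by
    linear_combination 2*E11 + 2*E22 - (a*a+b*c+c*b+d*d)*hα - (p*p+q*r+r*q+s*s)*hβ
      - 2*hBx - b*c*h40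
  exact r4_two_ne_zero hz

lemma both_even (α β : R4) (hα : 2*α = 0) (hβ : 2*β = 0) (X Y : M2) :
    α•X^2 + β•Y^2 ≠ !![0, 0; 0, 1] := by
  intro heq
  have E22 : (α•X^2 + β•Y^2) 1 1 = !![(0:R4), 0; 0, 1] 1 1 := by rw [heq]
  simp [pow_two, Matrix.mul_apply, Fin.sum_univ_two, Matrix.add_apply, Matrix.smul_apply,
    smul_eq_mul] at E22
  have hz : (2 : R4) = 0 := by
    linear_combination 2*E22 - (X 1 0 * X 0 1 + X 1 1 * X 1 1)*hα
      - (Y 1 0 * Y 0 1 + Y 1 1 * Y 1 1)*hβ + h40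
  exact r4_two_ne_zero hz

lemma parity_cases (x : R4) : 2*x = 0 ∨ 2*x = 2 := by revert x; decide
lemma odd_mul (α β : R4) (hα : 2*α = 2) (hβ : 2*β = 2) : α*β = 1 ∨ α*β = 3 := by
  revert α β; decide
lemma odd_sq (α : R4) (h : 2*α = 2) : α*α = 1 := by revert α; decide
lemma odd13 (α : R4) (h : 2*α = 2) : α + 3*α = 0 ∧ α - 3*α = 2 := by revert α; decide
lemma odd_two_mul (α : R4) (h : 2*α = 2) : α*2 = 2 := by revert α; decide



noncomputable def Phi : Matrix (Fin 2) (Fin 2) ℤ →+* M2 :=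
  (Int.castRingHom R4).mapMatrix

theorem stmt4 (m : ℕ) (a : Fin m → ℤ)
    (h : (Finset.univ.filter fun i => ¬ (4 ∣ a i)).card ≤ 2) :
    ∃ M : Matrix (Fin 2) (Fin 2) ℤ,
      ¬ ∃ A : Fin m → Matrix (Fin 2) (Fin 2) ℤ, M = ∑ i, a i • (A i) ^ 2 := by
  have hsum : ∀ A : Fin m → Matrix (Fin 2) (Fin 2) ℤ,
      Phi (∑ i, a i • A i ^ 2) =
        ∑ i ∈ Finset.univ.filter (fun i => ¬ (4 ∣ a i)), ((a i : R4) • (Phi (A i))^2) := by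
    intro A
    rw [map_sum]
    have h1 : ∀ i : Fin m, Phi (a i • A i ^ 2) = (a i : R4) • (Phi (A i))^2 := by
      intro i
      rw [map_zsmul, map_pow, ← Int.cast_smul_eq_zsmul R4]
    simp_rw [h1]
    refine (Finset.sum_filter_of_ne ?_).symm
    intro x _ hx hdvd
    apply hx
    rw [(ZMod.intCast_zmod_eq_zero_iff_dvd (a x) 4).mpr (by exact_mod_cast hdvd)]
    simp
  have hred : ∃ α β : R4, ∀ A : Fin m → Matrix (Fin 2) (Fin 2) ℤ,
      ∃ X Y : M2, Phi (∑ i, a i • A i ^ 2) = α • X^2 + β • Y^2 := by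
    have hcase : (Finset.univ.filter (fun i : Fin m => ¬ (4 ∣ a i))).card = 0 ∨
        (Finset.univ.filter (fun i : Fin m => ¬ (4 ∣ a i))).card = 1 ∨
        (Finset.univ.filter (fun i : Fin m => ¬ (4 ∣ a i))).card = 2 := by omega
    rcases hcase with h0 | h1 | h2
    · refine ⟨0, 0, fun A => ⟨0, 0, ?_⟩⟩
      rw [hsum A, Finset.card_eq_zero.mp h0]
      simp
    · obtain ⟨j, hj⟩ := Finset.card_eq_one.mp h1
      refine ⟨(a j : R4), 0, fun A => ⟨Phi (A j), 0, ?_⟩⟩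
      rw [hsum A, hj, Finset.sum_singleton]
      simp
    · obtain ⟨j, k, hjk, hs⟩ := Finset.card_eq_two.mp h2
      refine ⟨(a j : R4), (a k : R4), fun A => ⟨Phi (A j), Phi (A k), ?_⟩⟩
      rw [hsum A, hs, Finset.sum_pair hjk]
  obtain ⟨α, β, hrep⟩ := hred
  have key : ∀ (M : Matrix (Fin 2) (Fin 2) ℤ),
      (∀ X Y : M2, Phi M ≠ α • X^2 + β • Y^2) →
      ¬ ∃ A : Fin m → Matrix (Fin 2) (Fin 2) ℤ, M = ∑ i, a i • (A i) ^ 2 := by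
    rintro M hM ⟨A, hA⟩
    obtain ⟨X, Y, hXY⟩ := hrep A
    exact hM X Y (by rw [hA, hXY])
  rcases parity_cases α with hα | hα <;> rcases parity_cases β with hβ | hβ
  · -- both even
    refine ⟨!![0,0;0,1], key _ fun X Y heq => both_even α β hα hβ X Y ?_⟩
    rw [← heq]
    ext i j
    fin_cases i <;> fin_cases j <;> simp [Phi, RingHom.mapMatrix_apply, Matrix.map_apply]
  · -- α even, β odd
    refine ⟨!![0,0;1,0], key _ fun X Y heq => one_odd β α hβ hα Y X ?_⟩
    rw [add_comm, ← heq]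
    ext i j
    fin_cases i <;> fin_cases j <;> simp [Phi, RingHom.mapMatrix_apply, Matrix.map_apply]
  · -- α odd, β even
    refine ⟨!![0,0;1,0], key _ fun X Y heq => one_odd α β hα hβ X Y ?_⟩
    rw [← heq]
    ext i j
    fin_cases i <;> fin_cases j <;> simp [Phi, RingHom.mapMatrix_apply, Matrix.map_apply]
  · -- both odd
    rcases odd_mul α β hα hβ with hm | hm
    · refine ⟨!![1,0;0,3], key _ fun X Y heq => ?_⟩
      have h2 : α • Phi !![1,0;0,3] = α • (α • X^2 + β • Y^2) := by rw [heq]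
      rw [smul_add, smul_smul, smul_smul, odd_sq α hα, hm, one_smul, one_smul] at h2
      refine sum_sq α (3*α) (odd13 α hα).1 (odd13 α hα).2 X Y (h2.symm.trans ?_)
      ext i j
      fin_cases i <;> fin_cases j <;>
        simp [Phi, RingHom.mapMatrix_apply, Matrix.map_apply, Matrix.smul_apply, mul_comm]
    · refine ⟨!![0,0;0,2], key _ fun X Y heq => ?_⟩
      have h2 : α • Phi !![0,0;0,2] = α • (α • X^2 + β • Y^2) := by rw [heq]
      rw [smul_add, smul_smul, smul_smul, odd_sq α hα, hm, one_smul] at h2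
      refine diff_sq X Y (h2.symm.trans ?_)
      ext i j
      fin_cases i <;> fin_cases j <;>
        simp [Phi, RingHom.mapMatrix_apply, Matrix.map_apply, Matrix.smul_apply,
          odd_two_mul α hα]
end

section
/- For integers a, b, c, the form aX² + bY² + cZ² is universal over M₂(ℤ) if and only if a, b, c are pairwise coprime and abc is not a multiple of 4. -/
/-!
Sufficiency: take `A`, `B` with prescribed traces `σ`, `τ` and `C = !![0, 1; e, 0]`, so that
`C ^ 2 = e • 1`. Since `A ^ 2 = σ • A - det A • 1`, the off-diagonal entries and the difference
of the diagonal entries of `s • A ^ 2 + t • B ^ 2` are linear in the entries of `A` and `B` and are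
solved by Bézout; the entry `M 0 0` then only has to be matched modulo `r`, which is possible as
soon as the amount by which it moves along the solutions of the linear equations is a unit
modulo `r`. The traces are chosen by a case analysis on parities.

Necessity: modulo a maximal ideal containing `a` and `b`, the nilpotent `!![0, 1; 0, 0]` would be a
multiple of a square, which is impossible over a domain. If `4 ∣ a` while `b`, `c` are odd, then
`!![k + 2, 0; 0, k]` with `b + c = 2 * k` is not represented: reading the equation modulo `4`, the
diagonal difference forces both traces of `B` and `C` to be odd, and then the trace and the
off-diagonal entries give incompatible parities.
-/

open Matrix

variable {R : Type*} [CommRing R]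

def Represents (a b c : R) (M : Matrix (Fin 2) (Fin 2) R) : Prop :=
  ∃ A B C : Matrix (Fin 2) (Fin 2) R, M = a • A ^ 2 + b • B ^ 2 + c • C ^ 2

namespace Represents

variable {a b c : R} {M : Matrix (Fin 2) (Fin 2) R}

theorem rotate : Represents a b c M → Represents b c a M := by
  rintro ⟨A, B, C, rfl⟩
  exact ⟨B, C, A, by abel⟩

theorem rotate_iff : Represents a b c M ↔ Represents b c a M :=
  ⟨rotate, fun h => h.rotate.rotate⟩

theorem swap : Represents a b c M → Represents a c b M := by
  rintro ⟨A, B, C, rfl⟩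
  exact ⟨A, C, B, by abel⟩

theorem of_transpose (h : Represents a b c Mᵀ) : Represents a b c M := by
  obtain ⟨A, B, C, h⟩ := h
  refine ⟨Aᵀ, Bᵀ, Cᵀ, ?_⟩
  rw [← transpose_transpose M, h]
  simp only [transpose_add, transpose_smul, transpose_pow]

theorem map {S : Type*} [CommRing S] (f : R →+* S) (h : Represents a b c M) :
    Represents (f a) (f b) (f c) (f.mapMatrix M) := by
  obtain ⟨A, B, C, rfl⟩ := h
  have hsmul (r : R) (X : Matrix (Fin 2) (Fin 2) R) :
      f.mapMatrix (r • X) = f r • f.mapMatrix X :=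
    Matrix.map_smul' _ _ _ (map_mul f)
  exact ⟨f.mapMatrix A, f.mapMatrix B, f.mapMatrix C, by simp only [map_add, hsmul, map_pow]⟩

end Represents

theorem sq_apply_fin_two (A : Matrix (Fin 2) (Fin 2) R) (i j : Fin 2) :
    (A ^ 2) i j = A i 0 * A 0 j + A i 1 * A 1 j := by
  rw [sq, mul_apply, Fin.sum_univ_two]

theorem exists_add_mul_eq_isCoprime {p q m : ℤ} (hpq : IsCoprime p q) (hpm : IsCoprime p m)
    (n : ℤ) : ∃ z₁ z₂, p * z₁ + q * z₂ = n ∧ IsCoprime z₂ m := by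
  obtain ⟨u, v, huv⟩ := hpq
  obtain ⟨k, l, hkl⟩ := hpm
  refine ⟨u * n + q * k * (v * n - 1), v * n - p * k * (v * n - 1), ?_, ?_⟩
  · linear_combination n * huv
  · exact ⟨1, -(l * (v * n - 1)), by linear_combination -(v * n - 1) * hkl⟩

theorem represents_of_traces {s t r σ τ d p q z₁ z₂ : ℤ} {M : Matrix (Fin 2) (Fin 2) ℤ}
    (hσ : s * σ = d * p) (hτ : t * τ = d * q) (hpq : IsCoprime p q)
    (h01 : d ∣ M 0 1) (hdiag : 2 * d ∣ M 0 0 - M 1 1 + s * σ ^ 2 + t * τ ^ 2)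
    (h10 : s * σ * z₁ + t * τ * z₂ = M 1 0) (hr : IsCoprime (s * q * z₁ - t * p * z₂) r) :
    Represents s t r M := by
  obtain ⟨u, v, huv⟩ := hpq
  obtain ⟨μ, hμ⟩ := h01
  obtain ⟨h, hh⟩ := hdiag
  obtain ⟨w, w', hw⟩ := hr
  -- Shifting the upper-right entries of `A`, `B` by `w * g * (q, -p)` keeps the `(0, 1)` entry of
  -- the sum and adds `w * g * (s * q * z₁ - t * p * z₂) ≡ g [ZMOD r]` to its `(0, 0)` entry.
  set g := M 0 0 - (s * ((u * h) ^ 2 + u * μ * z₁) + t * ((v * h) ^ 2 + v * μ * z₂)) with hg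
  refine ⟨!![u * h, u * μ + w * g * q; z₁, σ - u * h],
    !![v * h, v * μ - w * g * p; z₂, τ - v * h], !![0, 1; g * w', 0], ?_⟩
  ext i j
  fin_cases i <;> fin_cases j <;>
    simp only [Matrix.add_apply, Matrix.smul_apply, smul_eq_mul, sq_apply_fin_two] <;> simp
  · linear_combination hg - g * hw
  · linear_combination hμ - (u * μ + w * g * q) * hσ - (v * μ - w * g * p) * hτ - d * μ * huv
  · linear_combination -h10
  · linear_combination hg - g * hw - hh + 2 * u * h * hσ + 2 * v * h * hτ + 2 * d * h * huv

theorem represents_of_traces_of_dvd {s t r σ τ d p q : ℤ} {M : Matrix (Fin 2) (Fin 2) ℤ}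
    (hσ : s * σ = d * p) (hτ : t * τ = d * q) (hpq : IsCoprime p q) (hrq : r ∣ q)
    (hpr : IsCoprime p r) (htr : IsCoprime t r) (h01 : d ∣ M 0 1) (h10 : d ∣ M 1 0)
    (hdiag : 2 * d ∣ M 0 0 - M 1 1 + s * σ ^ 2 + t * τ ^ 2) : Represents s t r M := by
  obtain ⟨ν, hν⟩ := h10
  obtain ⟨z₁, z₂, hz, hz₂⟩ := exists_add_mul_eq_isCoprime hpq hpr ν
  obtain ⟨k, rfl⟩ := hrq
  refine represents_of_traces (z₁ := z₁) (z₂ := z₂) hσ hτ hpq h01 hdiag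
    (by linear_combination z₁ * hσ + z₂ * hτ + d * hz - hν) ?_
  rw [show s * (r * k) * z₁ - t * p * z₂ = -(t * p * z₂) + r * (s * k * z₁) by ring]
  exact ((htr.mul_left hpr).mul_left hz₂).neg_left.add_mul_left_left _

section Sufficiency

variable {a b c a₀ : ℤ} {M : Matrix (Fin 2) (Fin 2) ℤ}

theorem represents_of_odd (hb : Odd b) (hc : Odd c) (hab : IsCoprime a b)
    (hbc : IsCoprime b c) (hca : IsCoprime c a) (h : Odd a ∨ Odd (M 0 0 + M 1 1)) :
    Represents a b c M := by
  -- `τ` is a multiple of `c`, is coprime to `a`, and has the parity that makes `hdiag` hold.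
  set τ := c * (1 + a * (M 0 0 + M 1 1))
  have hdiag : 2 * 1 ∣ M 0 0 - M 1 1 + a * 1 ^ 2 + b * τ ^ 2 := by
    rw [mul_one, ← even_iff_two_dvd]
    simp only [τ, ← Int.not_even_iff_odd, Int.even_add, Int.even_sub, Int.even_mul, Int.even_pow,
      Int.not_even_one] at *
    tauto
  have haτ : IsCoprime a (1 + a * (M 0 0 + M 1 1)) := ⟨-(M 0 0 + M 1 1), 1, by ring⟩
  exact represents_of_traces_of_dvd (d := 1) (by ring) (one_mul (b * τ)).symm
    (hab.mul_right (hca.symm.mul_right haτ)) ⟨b * (1 + a * (M 0 0 + M 1 1)), by ring⟩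
    hca.symm hbc (one_dvd _) (one_dvd _) hdiag

theorem represents_two_mul_of_odd_apply_one_zero (ha₀ : Odd a₀) (hb : Odd b) (hc : Odd c)
    (hab : IsCoprime a₀ b) (hbc : IsCoprime b c) (hca : IsCoprime c a₀)
    (htr : Even (M 0 0 + M 1 1)) (h10 : Odd (M 1 0)) : Represents (2 * a₀) b c M := by
  obtain ⟨z₁, z₂, hz, hz₂⟩ :=
    exists_add_mul_eq_isCoprime (hbc.mul_right hab.symm) hab.symm (M 1 0)
  have hdiag : 2 * 1 ∣ M 0 0 - M 1 1 + b * 1 ^ 2 + c * a₀ ^ 2 := by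
    rw [mul_one, ← even_iff_two_dvd]
    simp only [← Int.not_even_iff_odd, Int.even_add, Int.even_sub, Int.even_mul, Int.even_pow]
      at *
    tauto
  have hcop₂ : IsCoprime (b * (c * a₀) * z₁ - c * b * z₂) 2 := by
    rw [Int.isCoprime_two_right]
    rw [← hz] at h10
    simp only [← Int.not_even_iff_odd, Int.even_add, Int.even_sub, Int.even_mul] at *
    tauto
  have hcop₀ : IsCoprime (b * (c * a₀) * z₁ - c * b * z₂) a₀ := by
    rw [show b * (c * a₀) * z₁ - c * b * z₂ = b * c * (-z₂ + a₀ * z₁) by ring]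
    exact (hab.symm.mul_left hca).mul_left (hz₂.neg_left.add_mul_left_left z₁)
  exact (represents_of_traces (d := 1) (by ring) (by ring) (hbc.mul_right hab.symm) (one_dvd _)
    hdiag (by linear_combination hz) (hcop₂.mul_right hcop₀)).rotate.rotate

theorem represents_two_mul_of_two_dvd_offDiag (ha₀ : Odd a₀) (hb : Odd b) (hc : Odd c)
    (hab : IsCoprime a₀ b) (hbc : IsCoprime b c) (hca : IsCoprime c a₀)
    (htr : Even (M 0 0 + M 1 1)) (h01 : 2 ∣ M 0 1) (h10 : 2 ∣ M 1 0) :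
    Represents (2 * a₀) b c M := by
  have hab' : IsCoprime (2 * a₀) b := (Int.isCoprime_two_left.2 hb).mul_left hab
  refine Represents.swap ?_
  by_cases h4 : 4 ∣ M 0 0 - M 1 1
  · refine represents_of_traces_of_dvd (σ := 2) (τ := 2 * b) (d := 2) (q := c * b) (by ring)
      (by ring) (((Int.isCoprime_two_left.2 hc).mul_left hca.symm).mul_right hab')
      (dvd_mul_left b c) hab' hbc.symm h01 h10 ?_
    rw [show M 0 0 - M 1 1 + 2 * a₀ * 2 ^ 2 + c * (2 * b) ^ 2
      = M 0 0 - M 1 1 + 4 * (2 * a₀ + c * b ^ 2) by ring]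
    exact h4.add (dvd_mul_right _ _)
  · refine represents_of_traces_of_dvd (σ := 1) (τ := 2 * b) (d := 2) (q := c * b) (by ring)
      (by ring) (hca.symm.mul_right hab) (dvd_mul_left b c) hab hbc.symm h01 h10 ?_
    rw [show M 0 0 - M 1 1 + 2 * a₀ * 1 ^ 2 + c * (2 * b) ^ 2
      = M 0 0 - M 1 1 + 2 * a₀ + 4 * (c * b ^ 2) by ring]
    obtain ⟨m, hm⟩ := htr
    obtain ⟨j, hj⟩ := ha₀
    exact (show (2 * 2 : ℤ) ∣ M 0 0 - M 1 1 + 2 * a₀ by omega).add (dvd_mul_right _ _)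

theorem represents_two_mul_of_odd (ha₀ : Odd a₀) (hb : Odd b) (hc : Odd c)
    (hab : IsCoprime a₀ b) (hbc : IsCoprime b c) (hca : IsCoprime c a₀) :
    Represents (2 * a₀) b c M := by
  rcases Int.even_or_odd (M 0 0 + M 1 1) with htr | htr
  · rcases Int.even_or_odd (M 1 0) with h10 | h10
    · rcases Int.even_or_odd (M 0 1) with h01 | h01
      · exact represents_two_mul_of_two_dvd_offDiag ha₀ hb hc hab hbc hca htr
          (even_iff_two_dvd.1 h01) (even_iff_two_dvd.1 h10)
      · exact Represents.of_transpose
          (represents_two_mul_of_odd_apply_one_zero ha₀ hb hc hab hbc hca htr h01)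
    · exact represents_two_mul_of_odd_apply_one_zero ha₀ hb hc hab hbc hca htr h10
  · exact represents_of_odd hb hc ((Int.isCoprime_two_left.2 hb).mul_left hab) hbc
      ((Int.isCoprime_two_right.2 hc).mul_right hca) (Or.inr htr)

end Sufficiency

theorem smul_sq_ne_single {K : Type*} [CommRing K] [IsDomain K] (c : K)
    (Z : Matrix (Fin 2) (Fin 2) K) : c • Z ^ 2 ≠ !![0, 1; 0, 0] := by
  intro h
  have e (i j : Fin 2) := congrFun (congrFun h i) j
  simp only [Matrix.smul_apply, smul_eq_mul, sq_apply_fin_two] at e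
  have e00 := e 0 0
  have e01 := e 0 1
  have e10 := e 1 0
  have e11 := e 1 1
  simp only [of_apply, cons_val', cons_val_zero, cons_val_one, cons_val_fin_one, empty_val']
    at e00 e01 e10 e11
  have hc : c ≠ 0 := left_ne_zero_of_mul_eq_one e01
  have ht : Z 0 0 + Z 1 1 ≠ 0 :=
    right_ne_zero_of_mul_eq_one (a := c * Z 0 1) (by linear_combination e01)
  have h10 : Z 1 0 = 0 := by
    simpa [hc, ht] using (by linear_combination e10 : c * Z 1 0 * (Z 0 0 + Z 1 1) = 0)
  have h00 : Z 0 0 = 0 := by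
    simpa [hc] using (by linear_combination e00 - c * Z 0 1 * h10 : c * Z 0 0 ^ 2 = 0)
  have h11 : Z 1 1 = 0 := by
    simpa [hc] using (by linear_combination e11 - c * Z 0 1 * h10 : c * Z 1 1 ^ 2 = 0)
  exact ht (by rw [h00, h11, add_zero])

theorem isCoprime_of_represents_single {a b c : R} (h : Represents a b c !![0, 1; 0, 0]) :
    IsCoprime a b := by
  by_contra hab
  obtain ⟨m, hm, hle⟩ := Ideal.exists_le_maximal (Ideal.span {a, b})
    fun htop => hab (Ideal.mem_span_pair.1 ((Ideal.eq_top_iff_one _).1 htop))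
  let := Ideal.Quotient.field m
  have hmem (x : R) (hx : x ∈ ({a, b} : Set R)) : Ideal.Quotient.mk m x = 0 :=
    Ideal.Quotient.eq_zero_iff_mem.2 (hle (Ideal.subset_span hx))
  obtain ⟨A, B, C, hABC⟩ := h.map (Ideal.Quotient.mk m)
  rw [hmem a (by simp), hmem b (by simp), zero_smul, zero_smul, zero_add, zero_add] at hABC
  refine smul_sq_ne_single _ _ (hABC.symm.trans ?_)
  ext i j
  fin_cases i <;> fin_cases j <;> simp

section Square

variable {A : Matrix (Fin 2) (Fin 2) ℤ}

theorem four_dvd_sq_sub_of_even_trace (h : Even (A 0 0 + A 1 1)) :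
    4 ∣ (A ^ 2) 0 0 - (A ^ 2) 1 1 := by
  obtain ⟨m, hm⟩ := h
  exact ⟨m * (m - A 1 1), by
    simp only [sq_apply_fin_two]; linear_combination (A 0 0 - A 1 1 + 2 * m) * hm⟩

theorem odd_sq_sub_of_odd_trace (h : Odd (A 0 0 + A 1 1)) :
    Odd ((A ^ 2) 0 0 - (A ^ 2) 1 1) := by
  obtain ⟨m, hm⟩ := h
  refine ⟨2 * m * (m - A 1 1) + 2 * m - A 1 1, ?_⟩
  simp only [sq_apply_fin_two]
  linear_combination (A 0 0 - A 1 1 + 2 * m + 1) * hm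

theorem exists_sq_add_sq_of_odd_trace (h : Odd (A 0 0 + A 1 1)) :
    ∃ w, (A ^ 2) 0 0 + (A ^ 2) 1 1 = 4 * w + 1 + 2 * (A 0 1 * A 1 0) := by
  obtain ⟨m, hm⟩ := h
  obtain ⟨i, hi⟩ := Int.even_mul_succ_self m
  obtain ⟨j, hj⟩ := Int.even_mul_succ_self (m - A 1 1)
  refine ⟨i + j, ?_⟩
  simp only [sq_apply_fin_two]
  linear_combination (A 0 0 + 2 * m + 1 - A 1 1) * hm + 2 * hi + 2 * hj

end Square

theorem odd_traces_of_two_eq {n y z : ℤ} {Y Z : Matrix (Fin 2) (Fin 2) ℤ}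
    (hy : Odd y) (hz : Odd z)
    (h : 2 = 4 * n + y * ((Y ^ 2) 0 0 - (Y ^ 2) 1 1) + z * ((Z ^ 2) 0 0 - (Z ^ 2) 1 1)) :
    Odd (Y 0 0 + Y 1 1) ∧ Odd (Z 0 0 + Z 1 1) := by
  have hn : Even (4 * n) := ⟨2 * n, by ring⟩
  rcases Int.even_or_odd (Y 0 0 + Y 1 1) with hY | hY <;>
    rcases Int.even_or_odd (Z 0 0 + Z 1 1) with hZ | hZ
  · have : (4 : ℤ) ∣ 2 := h ▸ ((dvd_mul_right _ _).add
      ((four_dvd_sq_sub_of_even_trace hY).mul_left y)).add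
      ((four_dvd_sq_sub_of_even_trace hZ).mul_left z)
    norm_num at this
  · have := (hn.add (((four_dvd_sq_sub_of_even_trace hY).mul_left y).even (by norm_num))
      ).add_odd (hz.mul (odd_sq_sub_of_odd_trace hZ))
    rw [← h] at this
    norm_num at this
  · have := (hn.add_odd (hy.mul (odd_sq_sub_of_odd_trace hY))).add_even
      (((four_dvd_sq_sub_of_even_trace hZ).mul_left z).even (by norm_num))
    rw [← h] at this
    norm_num at this
  · exact ⟨hY, hZ⟩

theorem not_represents_diag {x y z k : ℤ} (hx : 4 ∣ x) (hy : Odd y) (hz : Odd z)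
    (hk : y + z = 2 * k) : ¬ Represents x y z !![k + 2, 0; 0, k] := by
  rintro ⟨X, Y, Z, h⟩
  have e (i j : Fin 2) := congrFun (congrFun h i) j
  simp only [Matrix.add_apply, Matrix.smul_apply, smul_eq_mul] at e
  have e00 := e 0 0
  have e01 := e 0 1
  have e10 := e 1 0
  have e11 := e 1 1
  simp only [of_apply, cons_val', cons_val_zero, cons_val_one, cons_val_fin_one, empty_val']
    at e00 e01 e10 e11
  obtain ⟨x₀, rfl⟩ := hx
  obtain ⟨hY, hZ⟩ := odd_traces_of_two_eq (n := x₀ * ((X ^ 2) 0 0 - (X ^ 2) 1 1))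
    (Y := Y) (Z := Z) hy hz (by linear_combination e00 - e11)
  obtain ⟨w, hw⟩ := exists_sq_add_sq_of_odd_trace hY
  obtain ⟨w', hw'⟩ := exists_sq_add_sq_of_odd_trace hZ
  have hdet : Odd (y * (Y 0 1 * Y 1 0) + z * (Z 0 1 * Z 1 0)) := by
    refine ⟨-(x₀ * ((X ^ 2) 0 0 + (X ^ 2) 1 1) + y * w + z * w'),
      mul_left_cancel₀ two_ne_zero ?_⟩
    linear_combination -hk - e00 - e11 - y * hw - z * hw'
  rw [sq_apply_fin_two Y, sq_apply_fin_two Z] at e01 e10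
  have h01 : Even (y * (Y 0 1 * (Y 0 0 + Y 1 1)) + z * (Z 0 1 * (Z 0 0 + Z 1 1))) :=
    ⟨-(2 * x₀ * (X ^ 2) 0 1), by linear_combination -e01⟩
  have h10 : Even (y * (Y 1 0 * (Y 0 0 + Y 1 1)) + z * (Z 1 0 * (Z 0 0 + Z 1 1))) :=
    ⟨-(2 * x₀ * (X ^ 2) 1 0), by linear_combination -e10⟩
  generalize Y 0 0 + Y 1 1 = tY at hY h01 h10
  generalize Z 0 0 + Z 1 1 = tZ at hZ h01 h10
  simp only [← Int.not_even_iff_odd, Int.even_add, Int.even_mul] at hy hz hY hZ hdet h01 h10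
  tauto

theorem four_dvd_mul_iff_of_odd {a n : ℤ} (hn : Odd n) : 4 ∣ a * n ↔ 4 ∣ a := by
  have h4 : IsCoprime (2 * 2) n :=
    (Int.isCoprime_two_left.2 hn).mul_left (Int.isCoprime_two_left.2 hn)
  exact ⟨h4.dvd_of_dvd_mul_right, (dvd_mul_of_dvd_left · n)⟩

theorem universal_iff_of_even {a b c : ℤ} (hab : IsCoprime a b) (hbc : IsCoprime b c)
    (hca : IsCoprime c a) (ha : Even a) : (∀ M, Represents a b c M) ↔ ¬ 4 ∣ a * b * c := by
  have hb : Odd b := Int.isCoprime_two_left.1 (hab.of_isCoprime_of_dvd_left ha.two_dvd)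
  have hc : Odd c := Int.isCoprime_two_right.1 (hca.of_isCoprime_of_dvd_right ha.two_dvd)
  rw [mul_assoc, four_dvd_mul_iff_of_odd (hb.mul hc)]
  constructor
  · rintro h ha4
    obtain ⟨k, hk⟩ := hb.add_odd hc
    exact not_represents_diag ha4 hb hc (by rw [hk, two_mul]) (h _)
  · intro ha4 M
    obtain ⟨a₀, rfl⟩ := ha
    have ha₀ : Odd a₀ := Int.not_even_iff_odd.1 fun ⟨j, hj⟩ => ha4 ⟨j, by rw [hj]; ring⟩
    rw [← two_mul] at hab hca ⊢
    exact represents_two_mul_of_odd ha₀ hb hc hab.of_mul_left_right hbc hca.of_mul_right_right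

theorem universal_iff_of_isCoprime {a b c : ℤ} (hab : IsCoprime a b) (hbc : IsCoprime b c)
    (hca : IsCoprime c a) : (∀ M, Represents a b c M) ↔ ¬ 4 ∣ a * b * c := by
  rcases Int.even_or_odd a with ha | ha
  · exact universal_iff_of_even hab hbc hca ha
  rcases Int.even_or_odd b with hb | hb
  · rw [forall_congr' fun _ => Represents.rotate_iff, universal_iff_of_even hbc hca hab hb,
      show b * c * a = a * b * c by ring]
  rcases Int.even_or_odd c with hc | hc
  · rw [forall_congr' fun _ => Represents.rotate_iff.symm, universal_iff_of_even hca hab hbc hc,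
      show c * a * b = a * b * c by ring]
  refine ⟨fun _ h4 => ?_, fun _ _ => represents_of_odd hb hc hab hbc hca (Or.inl ha)⟩
  exact Int.not_even_iff_odd.2 ((ha.mul hb).mul hc) (even_iff_two_dvd.2 (dvd_trans ⟨2, rfl⟩ h4))

theorem stmt6 (a b c : ℤ) :
    (∀ M : Matrix (Fin 2) (Fin 2) ℤ,
        ∃ A B C : Matrix (Fin 2) (Fin 2) ℤ, M = a • A ^ 2 + b • B ^ 2 + c • C ^ 2) ↔
      (IsCoprime a b ∧ IsCoprime b c ∧ IsCoprime c a ∧ ¬ (4 ∣ a * b * c)) := by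
  refine ⟨fun h => ?_, fun ⟨hab, hbc, hca, h4⟩ =>
    (universal_iff_of_isCoprime hab hbc hca).2 h4⟩
  have hab := isCoprime_of_represents_single (h _)
  have hbc := isCoprime_of_represents_single (Represents.rotate (h _))
  have hca := isCoprime_of_represents_single (Represents.rotate (Represents.rotate (h _)))
  exact ⟨hab, hbc, hca, (universal_iff_of_isCoprime hab hbc hca).1 h⟩
end

section
/- Let a₁, a₂ be coprime integers with a₁t₁ + a₂t₂ = 1, and let A ∈ M_{p+q}(ℤ) be written in block form A = [[X, Y], [Z, W]] with X ∈ M_p(ℤ), W ∈ M_q(ℤ). Then A − a₁·[[0, t₁Y],[t₁Z, I]]² − a₂·[[0, t₂Y],[t₂Z, I]]² is block diagonal, i.e., has zero off-diagonal blocks. -/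
/-!
Squaring `[[0, tY], [tZ, 1]]` keeps the off-diagonal blocks `tY` and `tZ`, so the off-diagonal
blocks of the difference are `(1 - a₁t₁ - a₂t₂) • Y` and `(1 - a₁t₁ - a₂t₂) • Z`, both zero.
-/

namespace Matrix

variable {l m n o α : Type*}

theorem fromBlocks_sub [Sub α] (A : Matrix n l α) (B : Matrix n m α) (C : Matrix o l α)
    (D : Matrix o m α) (A' : Matrix n l α) (B' : Matrix n m α) (C' : Matrix o l α)
    (D' : Matrix o m α) :
    fromBlocks A B C D - fromBlocks A' B' C' D' =
      fromBlocks (A - A') (B - B') (C - C') (D - D') := by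
  ext (_ | _) (_ | _) <;> rfl

theorem fromBlocks_zero_one_sq [Fintype m] [Fintype n] [DecidableEq m] [DecidableEq n]
    [Ring α] (B : Matrix n m α) (C : Matrix m n α) :
    fromBlocks 0 B C 1 ^ 2 = fromBlocks (B * C) B C (C * B + 1) := by
  rw [sq, fromBlocks_multiply]
  simp

end Matrix

theorem sub_smul_smul_sub_smul_smul_eq_zero {R M : Type*} [CommRing R] [AddCommGroup M]
    [Module R M] {a₁ a₂ t₁ t₂ : R} (h : a₁ * t₁ + a₂ * t₂ = 1) (v : M) :
    v - a₁ • t₁ • v - a₂ • t₂ • v = 0 := by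
  rw [smul_smul, smul_smul, sub_sub, ← add_smul, h, one_smul, sub_self]

open Matrix in
theorem stmt7 (p q : ℕ) (a₁ a₂ t₁ t₂ : ℤ) (h : a₁ * t₁ + a₂ * t₂ = 1)
    (X : Matrix (Fin p) (Fin p) ℤ) (Y : Matrix (Fin p) (Fin q) ℤ)
    (Z : Matrix (Fin q) (Fin p) ℤ) (W : Matrix (Fin q) (Fin q) ℤ) :
    (Matrix.fromBlocks X Y Z W
        - a₁ • (Matrix.fromBlocks 0 (t₁ • Y) (t₁ • Z) 1) ^ 2
        - a₂ • (Matrix.fromBlocks 0 (t₂ • Y) (t₂ • Z) 1) ^ 2).toBlocks₁₂ = 0 ∧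
    (Matrix.fromBlocks X Y Z W
        - a₁ • (Matrix.fromBlocks 0 (t₁ • Y) (t₁ • Z) 1) ^ 2
        - a₂ • (Matrix.fromBlocks 0 (t₂ • Y) (t₂ • Z) 1) ^ 2).toBlocks₂₁ = 0 := by
  simp only [fromBlocks_zero_one_sq, fromBlocks_smul, fromBlocks_sub, toBlocks_fromBlocks₁₂,
    toBlocks_fromBlocks₂₁]
  exact ⟨sub_smul_smul_sub_smul_smul_eq_zero h Y, sub_smul_smul_sub_smul_smul_eq_zero h Z⟩
end

section
/- Suppose that for every sequence of pairwise coprime integers a₁,…,aₘ, the form Σ aᵢXᵢ² is universal over M_p(ℤ) and also universal over M_q(ℤ). Then for every sequence of pairwise coprime integers a₁,…,a_{m+2}, the form Σ_{i=1}^{m+2} aᵢXᵢ² is universal over M_{p+q}(ℤ). In particular, f(p+q) ≤ 2 + max{f(p), f(q)}. -/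
open Matrix

/-- A sum of block-diagonal matrices is block diagonal. -/
lemma sum_fromBlocks_diag {n₁ n₂ k : ℕ} (f : Fin k → Matrix (Fin n₁) (Fin n₁) ℤ)
    (g : Fin k → Matrix (Fin n₂) (Fin n₂) ℤ) :
    ∑ i, Matrix.fromBlocks (f i) 0 0 (g i) =
      Matrix.fromBlocks (∑ i, f i) 0 0 (∑ i, g i) := by
  ext (i | i) (j | j) <;>
    simp [Matrix.sum_apply, Matrix.fromBlocks]

theorem stmt8 (p q m : ℕ) (hp : 2 ≤ p) (hq : 2 ≤ q)
    (hP : ∀ a : Fin m → ℤ, (∀ i j, i ≠ j → IsCoprime (a i) (a j)) →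
      ∀ M : Matrix (Fin p) (Fin p) ℤ,
        ∃ A : Fin m → Matrix (Fin p) (Fin p) ℤ, M = ∑ i, a i • (A i) ^ 2)
    (hQ : ∀ a : Fin m → ℤ, (∀ i j, i ≠ j → IsCoprime (a i) (a j)) →
      ∀ M : Matrix (Fin q) (Fin q) ℤ,
        ∃ A : Fin m → Matrix (Fin q) (Fin q) ℤ, M = ∑ i, a i • (A i) ^ 2) :
    ∀ a : Fin (m + 2) → ℤ, (∀ i j, i ≠ j → IsCoprime (a i) (a j)) →
      ∀ M : Matrix (Fin (p + q)) (Fin (p + q)) ℤ,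
        ∃ A : Fin (m + 2) → Matrix (Fin (p + q)) (Fin (p + q)) ℤ,
          M = ∑ i, a i • (A i) ^ 2 := by
  intro a ha M
  -- reindex to work with block matrices
  set φ : Matrix (Fin p ⊕ Fin q) (Fin p ⊕ Fin q) ℤ ≃ₐ[ℤ] Matrix (Fin (p + q)) (Fin (p + q)) ℤ :=
    Matrix.reindexAlgEquiv ℤ ℤ finSumFinEquiv with hφ
  set N : Matrix (Fin p ⊕ Fin q) (Fin p ⊕ Fin q) ℤ := φ.symm M with hN
  -- last two indices
  set i₁ : Fin (m + 2) := ⟨m, by omega⟩ with hi₁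
  set i₂ : Fin (m + 2) := ⟨m + 1, by omega⟩ with hi₂
  have hne : i₁ ≠ i₂ := by simp [hi₁, hi₂, Fin.ext_iff]
  obtain ⟨u, v, huv⟩ := ha i₁ i₂ hne
  -- blocks of N
  set X := N.toBlocks₁₂ with hX
  set Y := N.toBlocks₂₁ with hY
  set A₁ : Matrix (Fin p ⊕ Fin q) (Fin p ⊕ Fin q) ℤ :=
    Matrix.fromBlocks 0 (u • X) (u • Y) 1 with hA₁
  set A₂ : Matrix (Fin p ⊕ Fin q) (Fin p ⊕ Fin q) ℤ :=
    Matrix.fromBlocks 0 (v • X) (v • Y) 1 with hA₂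
  have hsq : ∀ t : ℤ, (Matrix.fromBlocks 0 (t • X) (t • Y) 1 :
      Matrix (Fin p ⊕ Fin q) (Fin p ⊕ Fin q) ℤ) ^ 2 =
      Matrix.fromBlocks ((t * t) • (X * Y)) (t • X) (t • Y) ((t * t) • (Y * X) + 1) := by
    intro t
    rw [sq, Matrix.fromBlocks_multiply]
    congr 1 <;> simp [Matrix.smul_mul, Matrix.mul_smul, smul_smul, mul_assoc]
  -- the scalar weight on the diagonal corrections
  set w : ℤ := a i₁ * (u * u) + a i₂ * (v * v) with hw
  set P : Matrix (Fin p) (Fin p) ℤ := N.toBlocks₁₁ - w • (X * Y) with hPdef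
  set Q : Matrix (Fin q) (Fin q) ℤ :=
    N.toBlocks₂₂ - w • (Y * X) - (a i₁ + a i₂) • 1 with hQdef
  -- restrict the coefficients to the first m indices
  set b : Fin m → ℤ := fun i => a (Fin.castLE (by omega) i) with hb
  have hbcop : ∀ i j, i ≠ j → IsCoprime (b i) (b j) := by
    intro i j hij
    exact ha _ _ (fun hc => hij (Fin.castLE_injective _ hc))
  obtain ⟨F, hF⟩ := hP b hbcop P
  obtain ⟨G, hG⟩ := hQ b hbcop Q
  -- assemble
  set C : Fin (m + 2) → Matrix (Fin p ⊕ Fin q) (Fin p ⊕ Fin q) ℤ := fun k =>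
    if h : (k : ℕ) < m then Matrix.fromBlocks (F ⟨k, h⟩) 0 0 (G ⟨k, h⟩)
    else if (k : ℕ) = m then A₁ else A₂ with hC
  refine ⟨fun k => φ (C k), ?_⟩
  have key : N = ∑ k, a k • (C k) ^ 2 := by
    rw [Fin.sum_univ_castSucc, Fin.sum_univ_castSucc]
    have e1 : ∀ i : Fin m, (C ((i.castSucc).castSucc)) = Matrix.fromBlocks (F i) 0 0 (G i) := by
      intro i
      simp only [hC, Fin.coe_castSucc]
      rw [dif_pos i.isLt]
    have e2 : C ((Fin.last m).castSucc) = A₁ := by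
      simp [hC]
    have e3 : C (Fin.last (m + 1)) = A₂ := by
      simp [hC]
    have e4 : ∀ i : Fin m, a ((i.castSucc).castSucc) = b i := by
      intro i; rfl
    have e5 : a ((Fin.last m).castSucc) = a i₁ := rfl
    have e6 : a (Fin.last (m + 1)) = a i₂ := rfl
    calc N = Matrix.fromBlocks N.toBlocks₁₁ X Y N.toBlocks₂₂ := (Matrix.fromBlocks_toBlocks N).symm
    _ = Matrix.fromBlocks P 0 0 Q + a i₁ • A₁ ^ 2 + a i₂ • A₂ ^ 2 := by
        rw [hA₁, hA₂, hsq, hsq, Matrix.fromBlocks_smul, Matrix.fromBlocks_smul,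
          Matrix.fromBlocks_add, Matrix.fromBlocks_add, Matrix.fromBlocks_inj]
        have h1 : a i₁ * u + a i₂ * v = 1 := by linarith [huv]
        refine ⟨?_, ?_, ?_, ?_⟩
        · rw [hPdef, hw]; module
        · rw [smul_smul, smul_smul, zero_add, ← add_smul, h1, one_smul]
        · rw [smul_smul, smul_smul, zero_add, ← add_smul, h1, one_smul]
        · rw [hQdef, hw]; module
    _ = (∑ i : Fin m, a ((i.castSucc).castSucc) • (C ((i.castSucc).castSucc)) ^ 2)
          + a ((Fin.last m).castSucc) • (C ((Fin.last m).castSucc)) ^ 2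
          + a (Fin.last (m + 1)) • (C (Fin.last (m + 1))) ^ 2 := by
        rw [e2, e3, e5, e6]
        congr 1
        congr 1
        have : ∀ i : Fin m, a ((i.castSucc).castSucc) • (C ((i.castSucc).castSucc)) ^ 2 =
            Matrix.fromBlocks (b i • (F i) ^ 2) 0 0 (b i • (G i) ^ 2) := by
          intro i
          rw [e1, e4]
          rw [sq, Matrix.fromBlocks_multiply]
          simp [Matrix.fromBlocks_smul, sq]
        rw [Finset.sum_congr rfl (fun i _ => this i), sum_fromBlocks_diag, ← hF, ← hG]
  have := congrArg φ key
  rw [hN] at this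
  simpa [map_sum, map_pow] using this
end

section
/- Let a₁ and a₂ be coprime odd integers. Then for every integer m there exist integers c, d, u, v such that gcd(a₁(u−c), a₂(v−d)) = 1 and a₁(c² + 2u) + a₂(d² + 2v) = m. -/
lemma keyL : ∀ N : ℕ, ∀ n α β : ℤ, n.natAbs = N → n ≠ 0 → IsCoprime β n →
    ∃ q : ℤ, IsCoprime (α - β * q ^ 2) n := by
  intro N
  induction N using Nat.strong_induction_on with
  | _ N ih =>
    intro n α β hN hn hco
    by_cases hu : IsUnit n
    · refine ⟨0, ?_⟩
      rcases Int.isUnit_iff.mp hu with rfl | rfl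
      · exact isCoprime_one_right
      · exact ⟨0, -1, by ring⟩
    · have hnab : n.natAbs ≠ 1 := by
        intro h; exact hu (Int.isUnit_iff_natAbs_eq.mpr h)
      obtain ⟨p, hp, hpd⟩ := Int.exists_prime_and_dvd hnab
      obtain ⟨n', rfl⟩ := hpd
      have hn' : n' ≠ 0 := by rintro rfl; simp at hn
      have hp0 : p ≠ 0 := hp.ne_zero
      have hp2 : 2 ≤ p.natAbs := (Int.prime_iff_natAbs_prime.mp hp).two_le
      have hlt : n'.natAbs < N := by
        subst hN
        rw [Int.natAbs_mul]
        have h1 : 1 ≤ n'.natAbs := Nat.one_le_iff_ne_zero.mpr (Int.natAbs_ne_zero.mpr hn')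
        nlinarith
      have hcon' : IsCoprime β n' := hco.of_isCoprime_of_dvd_right ⟨p, mul_comm p n'⟩
      obtain ⟨q', hq'⟩ := ih n'.natAbs hlt n' α β rfl hn' hcon'
      by_cases hpn' : p ∣ n'
      · exact ⟨q', IsCoprime.mul_right (hq'.of_isCoprime_of_dvd_right hpn') hq'⟩
      · have hpcop : IsCoprime p n' := (Prime.coprime_iff_not_dvd hp).mpr hpn'
        have hcopβp : IsCoprime β p := hco.of_isCoprime_of_dvd_right ⟨n', rfl⟩
        have hpβ : ¬ p ∣ β := fun h => hp.not_unit (hcopβp.isUnit_of_dvd' h dvd_rfl)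
        set x₀ : ℤ := if p ∣ α then 1 else 0 with hx₀
        have hpx : ¬ p ∣ (α - β * x₀ ^ 2) := by
          by_cases hpa : p ∣ α
          · simp only [hx₀, if_pos hpa, one_pow, mul_one]
            intro h
            exact hpβ (by simpa using dvd_sub hpa h)
          · simp only [hx₀, if_neg hpa]
            simpa using hpa
        obtain ⟨s, t, hst⟩ := hpcop.symm  -- s * n' + t * p = 1
        have hns : n' * s = 1 - t * p := by linarith [hst]
        set q : ℤ := q' + n' * (s * (x₀ - q')) with hq
        refine ⟨q, ?_⟩
        have h2 : IsCoprime (α - β * q ^ 2) p := by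
          have hqx : q = x₀ - t * p * (x₀ - q') := by
            rw [hq]; linear_combination (x₀ - q') * hns
          have he : α - β * q ^ 2 =
              (α - β * x₀ ^ 2) + p * (β * (2 * x₀ * (t * (x₀ - q')) - (t * (x₀ - q')) ^ 2 * p)) := by
            rw [hqx]; ring
          rw [he]
          exact ((Prime.coprime_iff_not_dvd hp).mpr hpx).symm.add_mul_left_left _
        have h1 : IsCoprime (α - β * q ^ 2) n' := by
          have he : α - β * q ^ 2 =
              (α - β * q' ^ 2) + n' * (-(β * (2 * q' * (s * (x₀ - q')) + n' * (s * (x₀ - q')) ^ 2))) := by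
            rw [hq]; ring
          rw [he]
          exact hq'.add_mul_left_left _
        exact IsCoprime.mul_right h2 h1

theorem stmt9 (a₁ a₂ : ℤ) (h₁ : Odd a₁) (h₂ : Odd a₂) (hco : IsCoprime a₁ a₂) (m : ℤ) :
    ∃ c d u v : ℤ, IsCoprime (a₁ * (u - c)) (a₂ * (v - d)) ∧
      a₁ * (c ^ 2 + 2 * u) + a₂ * (d ^ 2 + 2 * v) = m := by
  have ha₁0 : a₁ ≠ 0 := by rintro rfl; simp at h₁
  have ha₂0 : a₂ ≠ 0 := by rintro rfl; simp at h₂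
  set M₀ : ℤ := m + a₁ + a₂ with hM₀
  obtain ⟨q₀, hq₀⟩ := keyL a₁.natAbs a₁ M₀ a₂ rfl ha₁0 hco.symm
  obtain ⟨p₀, hp₀⟩ := keyL a₂.natAbs a₂ (M₀ - a₂ * q₀ ^ 2) a₁ rfl ha₂0 hco
  -- find p, W with M₀ - a₂ q₀² - a₁ p² = 2W, W coprime to a₁ and a₂
  have key : ∃ p W : ℤ, M₀ - a₂ * q₀ ^ 2 - a₁ * p ^ 2 = 2 * W ∧
      IsCoprime (2 * W) a₁ ∧ IsCoprime (2 * W) a₂ := by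
    rcases Int.even_or_odd (M₀ - a₂ * q₀ ^ 2 - a₁ * p₀ ^ 2) with ⟨w, hw⟩ | ⟨w, hw⟩
    · refine ⟨p₀, w, by linarith, ?_, ?_⟩
      · have h := hq₀.add_mul_left_left (-p₀ ^ 2)
        rwa [show M₀ - a₂ * q₀ ^ 2 + a₁ * (-p₀ ^ 2) = 2 * w from by linarith] at h
      · have h := hp₀.add_mul_left_left (0 : ℤ)
        rwa [show M₀ - a₂ * q₀ ^ 2 - a₁ * p₀ ^ 2 + a₂ * 0 = 2 * w from by linarith] at h
    · obtain ⟨j, hj⟩ : Odd (a₁ * a₂ ^ 2) := h₁.mul (h₂.pow)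
      refine ⟨p₀ + a₂, w - a₁ * p₀ * a₂ - j, by linear_combination hw - hj, ?_, ?_⟩
      · have h := hq₀.add_mul_left_left (-(p₀ + a₂) ^ 2)
        rwa [show M₀ - a₂ * q₀ ^ 2 + a₁ * (-(p₀ + a₂) ^ 2) =
          2 * (w - a₁ * p₀ * a₂ - j) from by linear_combination hw - hj] at h
      · have h := hp₀.add_mul_left_left (-(a₁ * (2 * p₀ + a₂)))
        rwa [show M₀ - a₂ * q₀ ^ 2 - a₁ * p₀ ^ 2 + a₂ * -(a₁ * (2 * p₀ + a₂)) =
          2 * (w - a₁ * p₀ * a₂ - j) from by linear_combination hw - hj] at h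
  obtain ⟨p, W, hW, hc1, hc2⟩ := key
  have hW1 : IsCoprime W a₁ := hc1.of_mul_left_right
  have hW2 : IsCoprime W a₂ := hc2.of_mul_left_right
  obtain ⟨s, t, hst⟩ := hW2
  obtain ⟨σ, τ, hστ⟩ := hW1.symm.mul_right hco
  -- definitions
  set X : ℤ := 1 + s * W * (W - 1) with hX
  set μ : ℤ := -(X * τ) with hμ
  set A : ℤ := σ * X with hA0
  set B : ℤ := t * (W - 1) - W * μ with hB0
  set z : ℤ := s * (W - 1) + a₂ * μ with hz
  have hA : a₁ * A = 1 + W * z := by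
    rw [hA0, hz, hμ, hX]; linear_combination (1 + s * W * (W - 1)) * hστ
  have hB : a₂ * B = W - 1 - W * z := by
    rw [hB0, hz]; linear_combination (W - 1) * hst
  refine ⟨p - 1, q₀ - 1, p - 1 + A, q₀ - 1 + B, ?_, ?_⟩
  · refine ⟨1 - z, -z, ?_⟩
    have e1 : p - 1 + A - (p - 1) = A := by ring
    have e2 : q₀ - 1 + B - (q₀ - 1) = B := by ring
    rw [e1, e2]
    linear_combination (1 - z) * hA - z * hB
  · linear_combination 2 * hA + 2 * hB - hW
end

section
/- Let a₁ be odd and coprime to an integer m. Then there exists an integer d such that gcd(a₁, m − a₂(d² + 2d)) = 1, for any fixed integer a₂ coprime to a₁. More generally: for coprime a₁, a₂ with a₁ odd, and any integer m, there exist integers c, d with m − a₁(c² + 2c) − a₂(d² + 2d) even and coprime to a₁a₂. -/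
private lemma shift_coprime (x b K s w : ℤ)
    (hc : IsCoprime x (K - b * (s ^ 2 + 2 * s))) :
    IsCoprime x (K - b * ((s + x * w) ^ 2 + 2 * (s + x * w))) := by
  have h : K - b * ((s + x * w) ^ 2 + 2 * (s + x * w)) =
      (K - b * (s ^ 2 + 2 * s)) + x * (-(b * w * ((s + x * w) + s + 2))) := by ring
  rw [h]
  exact hc.add_mul_left_right _

private lemma key_aux (b K : ℤ) : ∀ a : ℤ, a ≠ 0 → IsCoprime a b →
    ∃ t : ℤ, IsCoprime a (K - b * (t ^ 2 + 2 * t)) := by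
  intro a
  induction a using UniqueFactorizationMonoid.induction_on_coprime with
  | h0 => exact fun h => absurd rfl h
  | h1 hx =>
    intro _ _
    obtain ⟨u, hu⟩ := hx.exists_left_inv
    exact ⟨0, ⟨u, 0, by rw [zero_mul, add_zero, hu]⟩⟩
  | hpr i hp =>
    rename_i p
    intro hne hcop
    rcases Nat.eq_zero_or_pos i with hi | hi
    · subst hi
      exact ⟨0, ⟨1, 0, by ring⟩⟩
    have hpb : IsCoprime p b := (IsCoprime.pow_left_iff hi).mp hcop
    by_cases hK : p ∣ K
    · refine ⟨-1, IsCoprime.pow_left ?_⟩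
      rw [hp.coprime_iff_not_dvd]
      intro hdvd
      have : p ∣ b := by
        have : (b : ℤ) = (K - b * ((-1 : ℤ) ^ 2 + 2 * (-1))) - K := by ring
        rw [this]
        exact dvd_sub hdvd hK
      exact (hp.coprime_iff_not_dvd.mp hpb) this
    · refine ⟨0, IsCoprime.pow_left ?_⟩
      rw [hp.coprime_iff_not_dvd]
      intro hdvd
      apply hK
      have : (K : ℤ) = K - b * ((0 : ℤ) ^ 2 + 2 * 0) := by ring
      rw [this]
      exact hdvd
  | hcp hxy ihx ihy =>
    rename_i x y
    intro hne hcop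
    have hx0 : x ≠ 0 := left_ne_zero_of_mul hne
    have hy0 : y ≠ 0 := right_ne_zero_of_mul hne
    obtain ⟨t₁, ht₁⟩ := ihx hx0 hcop.of_mul_left_left
    obtain ⟨t₂, ht₂⟩ := ihy hy0 hcop.of_mul_left_right
    obtain ⟨u, v, huv⟩ := hxy.isCoprime
    set t : ℤ := t₁ + x * (u * (t₂ - t₁)) with ht
    have hty : t = t₂ + y * (-(v * (t₂ - t₁))) := by
      rw [ht]; linear_combination (t₂ - t₁) * huv
    refine ⟨t, IsCoprime.mul_left ?_ ?_⟩
    · rw [ht]; exact shift_coprime x b K t₁ _ ht₁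
    · rw [hty]; exact shift_coprime y b K t₂ _ ht₂

theorem stmt10 (a₁ a₂ : ℤ) (h₁ : Odd a₁) (h₂ : Odd a₂) (hco : IsCoprime a₁ a₂) (m : ℤ) :
    ∃ c d : ℤ, 2 ∣ (m - a₁ * (c ^ 2 + 2 * c) - a₂ * (d ^ 2 + 2 * d)) ∧
      IsCoprime (a₁ * a₂) (m - a₁ * (c ^ 2 + 2 * c) - a₂ * (d ^ 2 + 2 * d)) := by
  have ha₁ : a₁ ≠ 0 := by rintro rfl; exact (Int.not_odd_iff_even.mpr Even.zero) h₁
  have ha₂ : a₂ ≠ 0 := by rintro rfl; exact (Int.not_odd_iff_even.mpr Even.zero) h₂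
  obtain ⟨d₀, hd₀⟩ := key_aux a₂ m a₁ ha₁ hco
  obtain ⟨c, hc⟩ := key_aux a₁ m a₂ ha₂ hco.symm
  -- for any d with IsCoprime a₁ (m - a₂ f d), the full expression is coprime to a₁ a₂
  have main : ∀ d : ℤ, IsCoprime a₁ (m - a₂ * (d ^ 2 + 2 * d)) →
      IsCoprime (a₁ * a₂) (m - a₁ * (c ^ 2 + 2 * c) - a₂ * (d ^ 2 + 2 * d)) := by
    intro d hd
    apply IsCoprime.mul_left
    · have h : m - a₁ * (c ^ 2 + 2 * c) - a₂ * (d ^ 2 + 2 * d) =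
        (m - a₂ * (d ^ 2 + 2 * d)) + a₁ * (-(c ^ 2 + 2 * c)) := by ring
      rw [h]; exact hd.add_mul_left_right _
    · have h : m - a₁ * (c ^ 2 + 2 * c) - a₂ * (d ^ 2 + 2 * d) =
        (m - a₁ * (c ^ 2 + 2 * c)) + a₂ * (-(d ^ 2 + 2 * d)) := by ring
      rw [h]; exact hc.add_mul_left_right _
  set N₀ : ℤ := m - a₁ * (c ^ 2 + 2 * c) - a₂ * (d₀ ^ 2 + 2 * d₀) with hN₀
  by_cases hev : Even N₀
  · exact ⟨c, d₀, hev.two_dvd, main d₀ hd₀⟩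
  · -- use d = d₀ + a₁
    have hodd : Odd N₀ := Int.not_even_iff_odd.mp hev
    refine ⟨c, d₀ + a₁ * 1, ?_, main _ (shift_coprime a₁ a₂ m d₀ 1 hd₀)⟩
    have hkey : m - a₁ * (c ^ 2 + 2 * c) - a₂ * ((d₀ + a₁ * 1) ^ 2 + 2 * (d₀ + a₁ * 1)) =
        N₀ - a₂ * a₁ * (2 * d₀ + a₁ + 2) := by rw [hN₀]; ring
    rw [hkey]
    have hodd2 : Odd (a₂ * a₁ * (2 * d₀ + a₁ + 2)) := by
      refine (h₂.mul h₁).mul ?_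
      have : 2 * d₀ + a₁ + 2 = a₁ + 2 * (d₀ + 1) := by ring
      rw [this]
      exact h₁.add_even (even_two_mul _)
    exact (hodd.sub_odd hodd2).two_dvd
end

section
/- Let a₁,…,a₆ be pairwise coprime integers such that at least three of a₂,…,a₆ are odd (in particular a₂, a₃, a₄ odd). Then every 3×3 integer matrix A can be written as A = a₁A₁² + a₂A₂² + ⋯ + a₆A₆² with Aᵢ ∈ M₃(ℤ). Consequently f(3) ≤ 6. -/
private lemma cop_shift {M t g : ℤ} (h : t = 1 + M * g) : IsCoprime M t :=
  ⟨-g, 1, by rw [h]; ring⟩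

private lemma solve_lin {m n : ℤ} (h : IsCoprime m n) (r : ℤ) :
    ∃ s c, m * s = r + n * c := by
  obtain ⟨u, v, huv⟩ := h
  exact ⟨u * r, -(v * r), by linear_combination r * huv⟩

private lemma crt2 {m n : ℤ} (h : IsCoprime m n) (r s : ℤ) :
    ∃ x c d, x = r + m * c ∧ x = s + n * d := by
  obtain ⟨u, v, huv⟩ := h
  exact ⟨r * (v * n) + s * (u * m), u * (s - r), v * (r - s),
    by linear_combination r * huv, by linear_combination s * huv⟩

private lemma crt3 {m n k : ℤ} (hmn : IsCoprime m n) (hmk : IsCoprime m k)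
    (hnk : IsCoprime n k) (r s t : ℤ) :
    ∃ x c d e, x = r + m * c ∧ x = s + n * d ∧ x = t + k * e := by
  obtain ⟨x1, c1, d1, h1, h2⟩ := crt2 hmn r s
  obtain ⟨x, c2, e2, h3, h4⟩ := crt2 (hmk.mul_left hnk) x1 t
  exact ⟨x, c1 + n * c2, d1 + m * c2, e2, by rw [h3, h1]; ring, by rw [h3, h2]; ring, h4⟩


set_option maxHeartbeats 1000000 in
private lemma assemble (a : Fin 6 → ℤ)
    (t0 p0 q0 p1 q1 t1 p2 q2 t2 x y z al be ga t4 p4 q4 q5 t5 : ℤ) :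
    (∑ i, a i • ((![!![0, 1, p0; t0, 0, q0; 0, 0, 0],
        !![0, 0, 0; p1, 0, 1; q1, t1, 0],
        !![0, p2, 1; 0, 0, 0; t2, q2, 0],
        !![x, al, be; 0, y, ga; 0, 0, z],
        !![0, 1, 0; t4, 0, 0; p4, q4, 0],
        !![0, 0, 0; 0, 0, 1; q5, t5, 0]] : Fin 6 → Matrix (Fin 3) (Fin 3) ℤ) i) ^ 2) =
      !![a 0 * t0 + a 2 * t2 + a 3 * (x * x) + a 4 * t4,
         a 2 * q2 + a 3 * ((x + y) * al),
         a 0 * q0 + a 3 * ((x + z) * be + al * ga);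
         a 1 * q1 + a 5 * q5,
         a 0 * t0 + a 1 * t1 + a 3 * (y * y) + a 4 * t4 + a 5 * t5,
         a 0 * (t0 * p0) + a 3 * ((y + z) * ga);
         a 1 * (t1 * p1) + a 4 * (t4 * q4),
         a 2 * (t2 * p2) + a 4 * p4,
         a 1 * t1 + a 2 * t2 + a 3 * (z * z) + a 5 * t5] := by
  ext i jj
  rw [Matrix.sum_apply]
  simp only [Fin.sum_univ_succ, Fin.sum_univ_zero, Matrix.cons_val_zero,
    Matrix.cons_val_succ, add_zero, pow_two, Matrix.smul_apply, Matrix.mul_apply,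
    smul_eq_mul]
  fin_cases i <;> fin_cases jj <;>
    simp [Fin.sum_univ_succ, Matrix.vecHead, Matrix.vecTail,
      show (Fin.succ 2 : Fin 6) = 3 from rfl,
      show ((Fin.succ 2).succ : Fin 6) = 4 from rfl,
      show ((Fin.succ 2).succ.succ : Fin 6) = 5 from rfl] <;> (first | ring1 | exact Or.inl (by ring))

theorem stmt14 (a : Fin 6 → ℤ) (hco : ∀ i j, i ≠ j → IsCoprime (a i) (a j))
    (hodd : Odd (a 1) ∧ Odd (a 2) ∧ Odd (a 3)) :
    ∀ A : Matrix (Fin 3) (Fin 3) ℤ,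
      ∃ B : Fin 6 → Matrix (Fin 3) (Fin 3) ℤ, A = ∑ i, a i • (B i) ^ 2 := by
  obtain ⟨ho1, ho2, ho3⟩ := hodd
  intro A
  have c01 : IsCoprime (a 0) (a 1) := hco 0 1 (by decide)
  have c02 : IsCoprime (a 0) (a 2) := hco 0 2 (by decide)
  have c03 : IsCoprime (a 0) (a 3) := hco 0 3 (by decide)
  have c04 : IsCoprime (a 0) (a 4) := hco 0 4 (by decide)
  have c05 : IsCoprime (a 0) (a 5) := hco 0 5 (by decide)
  have c12 : IsCoprime (a 1) (a 2) := hco 1 2 (by decide)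
  have c13 : IsCoprime (a 1) (a 3) := hco 1 3 (by decide)
  have c14 : IsCoprime (a 1) (a 4) := hco 1 4 (by decide)
  have c15 : IsCoprime (a 1) (a 5) := hco 1 5 (by decide)
  have c23 : IsCoprime (a 2) (a 3) := hco 2 3 (by decide)
  have c24 : IsCoprime (a 2) (a 4) := hco 2 4 (by decide)
  have c25 : IsCoprime (a 2) (a 5) := hco 2 5 (by decide)
  have c34 : IsCoprime (a 3) (a 4) := hco 3 4 (by decide)
  have c35 : IsCoprime (a 3) (a 5) := hco 3 5 (by decide)
  have c45 : IsCoprime (a 4) (a 5) := hco 4 5 (by decide)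
  have c2_1 : IsCoprime (2 : ℤ) (a 1) := by
    obtain ⟨m1, hm1⟩ := ho1; exact ⟨-m1, 1, by rw [hm1]; ring⟩
  have c2_2 : IsCoprime (2 : ℤ) (a 2) := by
    obtain ⟨m2, hm2⟩ := ho2; exact ⟨-m2, 1, by rw [hm2]; ring⟩
  have c2_3 : IsCoprime (2 : ℤ) (a 3) := by
    obtain ⟨m3, hm3⟩ := ho3; exact ⟨-m3, 1, by rw [hm3]; ring⟩
  obtain ⟨D, hD⟩ : ∃ v : ℤ, v = A 0 0 - A 1 1 + A 2 2 := ⟨_, rfl⟩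
  obtain ⟨xi, del, hxi, hdel⟩ : ∃ ξ δ : ℤ, ξ * ξ = ξ ∧ D + 1 - ξ = 2 * δ := by
    rcases Int.even_or_odd D with ⟨dd, hdd⟩ | ⟨dd, hdd⟩
    · exact ⟨1, dd, by ring, by omega⟩
    · exact ⟨0, dd + 1, by ring, by omega⟩
  have ca34 : IsCoprime (a 3) (2 * a 4) := c2_3.symm.mul_right c34
  obtain ⟨u4, v4, hu4⟩ := ca34  -- u4 * a 3 + v4 * (2 * a 4) = 1
  have hu4odd : Odd u4 := by
    have h5 : Odd (u4 * a 3) := by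
      have h6 : u4 * a 3 = 1 - 2 * (a 4 * v4) := by linear_combination hu4
      exact ⟨-(a 4 * v4), by rw [h6]; ring⟩
    exact (Int.odd_mul.mp h5).1
  obtain ⟨w4, hw4⟩ := hu4odd  -- u4 = 2 * w4 + 1
  obtain ⟨c4, hc4⟩ : ∃ v : ℤ, v = u4 * (D - 2 * a 2) := ⟨_, rfl⟩
  obtain ⟨rho, hrho⟩ : ∃ v : ℤ, v = w4 * D - u4 * a 2 + del := ⟨_, rfl⟩
  have h2rho : 2 * rho = c4 + 1 - xi := by
    rw [hrho, hc4]; linear_combination -D * hw4 - hdel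
  have c2a3a2 : IsCoprime (2 * a 3) (a 2) := IsCoprime.mul_left c2_2 c23.symm
  obtain ⟨uw, vw, huw⟩ := c2a3a2  -- uw * (2 * a3) + vw * a2 = 1
  obtain ⟨w, hwdef⟩ : ∃ v : ℤ, v = uw * D := ⟨_, rfl⟩
  have hw : 2 * a 3 * w + a 2 * (vw * D) = D := by
    rw [hwdef]; linear_combination D * huw
  obtain ⟨hh, vh, hhv⟩ := id c2_2  -- hh * 2 + vh * a2 = 1
  obtain ⟨chi, hchi⟩ : ∃ v : ℤ, v = hh + w := ⟨_, rfl⟩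
  obtain ⟨chip, hchip⟩ : ∃ v : ℤ, v = hh - w := ⟨_, rfl⟩
  have cop_2a4_a2 : IsCoprime (2 * a 4) (a 2) := IsCoprime.mul_left c2_2 c24.symm
  have cop_2a4_a1 : IsCoprime (2 * a 4) (a 1) := IsCoprime.mul_left c2_1 c14.symm
  obtain ⟨x, X4, X2, X1, hx4, hx2, hx1⟩ := crt3 cop_2a4_a2 cop_2a4_a1 c12.symm xi chi 0
  obtain ⟨s4, s4', hs4⟩ := id c04  -- s4 * a0 + s4' * a4 = 1
  obtain ⟨s2, s2', hs2⟩ := id c02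
  obtain ⟨s1, s1', hs1⟩ := id c01
  obtain ⟨k, K4, K2, K1, hk4, hk2, hk1⟩ :=
    crt3 c24.symm c14.symm c12.symm (s4 * (rho - 1 + x)) (s2 * (x - 1)) (s1 * (x - 1))
  obtain ⟨z, hzdef⟩ : ∃ v : ℤ, v = 1 - x + a 0 * k := ⟨_, rfl⟩
  have hz4 : z = rho + a 4 * (a 0 * K4 - s4' * (rho - 1 + x)) := by
    rw [hzdef]; linear_combination a 0 * hk4 + (rho - 1 + x) * hs4
  have hz2 : z = a 2 * (a 0 * K2 - s2' * (x - 1)) := by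
    rw [hzdef]; linear_combination a 0 * hk2 + (x - 1) * hs2
  have hz1 : z = a 1 * (a 0 * K1 - s1' * (x - 1)) := by
    rw [hzdef]; linear_combination a 0 * hk1 + (x - 1) * hs1
  obtain ⟨W, hW⟩ : ∃ v : ℤ, v = 2 * a 0 * a 4 * a 5 := ⟨_, rfl⟩
  have copW2 : IsCoprime W (a 2) := by
    rw [hW]; exact ((c2_2.mul_left c02).mul_left c24.symm).mul_left c25.symm
  have copW1 : IsCoprime W (a 1) := by
    rw [hW]; exact ((c2_1.mul_left c01).mul_left c14.symm).mul_left c15.symm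
  obtain ⟨j2, cj2, hj2⟩ := solve_lin copW2 (chip - 1 + z)  -- W*j2 = (chip-1+z) + a2*cj2
  obtain ⟨j1, cj1, hj1⟩ := solve_lin copW1 z              -- W*j1 = z + a1*cj1
  obtain ⟨j, Jc, Jd, hja, hjb⟩ := crt2 c12.symm j2 j1
  obtain ⟨y, hydef⟩ : ∃ v : ℤ, v = 1 - z + W * j := ⟨_, rfl⟩
  have hy2 : y = chip + a 2 * (W * Jc + cj2) := by
    rw [hydef]; linear_combination W * hja + hj2
  have hy1 : y = 1 + a 1 * (cj1 + W * Jd) := by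
    rw [hydef]; linear_combination W * hjb + hj1
  obtain ⟨N, hN⟩ : ∃ v : ℤ, v = x * x - y * y + z * z := ⟨_, rfl⟩
  have hT2 : D - a 3 * N - 2 * a 2 =
      a 2 * (vh * D + vw * D - a 2 * vw * vh * D
        - a 3 * (2 * chi * X2 + a 2 * X2 ^ 2 - 2 * chip * (W * Jc + cj2)
            - a 2 * (W * Jc + cj2) ^ 2 + a 2 * (a 0 * K2 - s2' * (x - 1)) ^ 2) - 2) := by
    rw [hN, hy2, hz2, hx2, hchi, hchip]
    linear_combination (-2 * hh) * hw - (D - a 2 * vw * D) * hhv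
  have hT4 : D - a 3 * N - 2 * a 2 =
      (2 * a 4) * (v4 * (D - 2 * a 2)
        - a 3 * (2 * xi * X4 + 2 * a 4 * X4 ^ 2 + (a 0 * K4 - s4' * (rho - 1 + x))
            - 2 * (1 - z) * a 0 * a 5 * j - 2 * a 0 ^ 2 * a 4 * a 5 ^ 2 * j ^ 2)) := by
    rw [hN, hydef, hW, hz4, hx4]
    linear_combination (- a 3) * h2rho - a 3 * hc4 - (D - 2 * a 2) * hu4 - a 3 * hxi
  obtain ⟨bu, bv, hbu⟩ := cop_2a4_a2.symm  -- bu * a2 + bv * (2*a4) = 1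
  obtain ⟨g, hg⟩ : ∃ v : ℤ, v = bu * (v4 * (D - 2 * a 2)
        - a 3 * (2 * xi * X4 + 2 * a 4 * X4 ^ 2 + (a 0 * K4 - s4' * (rho - 1 + x))
            - 2 * (1 - z) * a 0 * a 5 * j - 2 * a 0 ^ 2 * a 4 * a 5 ^ 2 * j ^ 2))
      + bv * (vh * D + vw * D - a 2 * vw * vh * D
        - a 3 * (2 * chi * X2 + a 2 * X2 ^ 2 - 2 * chip * (W * Jc + cj2)
            - a 2 * (W * Jc + cj2) ^ 2 + a 2 * (a 0 * K2 - s2' * (x - 1)) ^ 2) - 2) := ⟨_, rfl⟩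
  obtain ⟨t2, ht2def⟩ : ∃ v : ℤ, v = 1 + a 4 * g := ⟨_, rfl⟩
  have ht2 : D - a 3 * N = 2 * a 2 * t2 := by
    rw [ht2def, hg]
    linear_combination (bu * a 2) * hT4 + (bv * (2 * a 4)) * hT2
      - (D - a 3 * N - 2 * a 2) * hbu
  obtain ⟨m, hm⟩ : ∃ v : ℤ, v = A 0 0 - a 2 * t2 - a 3 * (x * x) := ⟨_, rfl⟩
  obtain ⟨n, hn⟩ : ∃ v : ℤ, v = A 2 2 - a 2 * t2 - a 3 * (z * z) := ⟨_, rfl⟩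
  have hxy : x + y = 1 + a 2 * (X2 + (W * Jc + cj2) - vh) := by
    linear_combination hx2 + hy2 + hhv + hchi + hchip
  have hxz : x + z = 1 + a 0 * k := by rw [hzdef]; ring
  have hyz0 : y + z = 1 + a 0 * (2 * a 4 * a 5 * j) := by rw [hydef, hW]; ring
  have hyz4 : y + z = 1 + a 4 * (2 * a 0 * a 5 * j) := by rw [hydef, hW]; ring
  have hyz5 : y + z = 1 + a 5 * (2 * a 0 * a 4 * j) := by rw [hydef, hW]; ring
  have hyz1 : y + z = 1 + a 1 * (cj1 + W * Jd + (a 0 * K1 - s1' * (x - 1))) := by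
    linear_combination hy1 + hz1
  have copa0yz : IsCoprime (a 0) (y + z) := cop_shift hyz0
  have copa4yz : IsCoprime (a 4) (y + z) := cop_shift hyz4
  have copa5yz : IsCoprime (a 5) (y + z) := cop_shift hyz5
  have copa1yz : IsCoprime (a 1) (y + z) := cop_shift hyz1
  obtain ⟨s5, tau5, hb15⟩ := id c15  -- s5 * a1 + tau5 * a5 = 1
  have cop_a5_Q1 : IsCoprime (a 5) (a 0 * (a 4 * (a 3 * (y + z)))) :=
    c05.symm.mul_right (c45.symm.mul_right (c35.symm.mul_right copa5yz))
  obtain ⟨us, cs, hus⟩ := solve_lin cop_a5_Q1 (1 - s5 * n)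
  obtain ⟨t1, ht1def⟩ : ∃ v : ℤ, v = s5 * n + a 5 * us := ⟨_, rfl⟩
  have ht1Q : t1 = 1 + a 0 * (a 4 * (a 3 * (y + z))) * cs := by
    rw [ht1def]; linear_combination hus
  obtain ⟨t5, ht5def⟩ : ∃ v : ℤ, v = n * tau5 - a 1 * us := ⟨_, rfl⟩
  have hn_split : a 1 * t1 + a 5 * t5 = n := by
    rw [ht1def, ht5def]; linear_combination n * hb15
  have copa0t1 : IsCoprime (a 0) t1 :=
    cop_shift (show t1 = 1 + a 0 * (a 4 * (a 3 * (y + z)) * cs) by linear_combination ht1Q)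
  have copa4t1 : IsCoprime (a 4) t1 :=
    cop_shift (show t1 = 1 + a 4 * (a 0 * (a 3 * (y + z)) * cs) by linear_combination ht1Q)
  have copQ0pt1 : IsCoprime (a 3 * (y + z)) t1 :=
    cop_shift (show t1 = 1 + (a 3 * (y + z)) * (a 0 * a 4 * cs) by linear_combination ht1Q)
  have cop_a0_Q0 : IsCoprime (a 0) (a 4 * (a 1 * t1)) :=
    c04.mul_right (c01.mul_right copa0t1)
  obtain ⟨s0b, lam, hs0⟩ := cop_a0_Q0  -- s0b * a0 + lam * (a4*(a1*t1)) = 1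
  have copQ0_Q0p : IsCoprime (a 4 * (a 1 * t1)) (a 3 * (y + z)) :=
    IsCoprime.mul_left (c34.symm.mul_right copa4yz)
      (IsCoprime.mul_left (c13.mul_right copa1yz) copQ0pt1.symm)
  obtain ⟨uq, cq, huq⟩ := solve_lin copQ0_Q0p (1 - s0b * (m - a 4))
  obtain ⟨t0, ht0def⟩ : ∃ v : ℤ, v = s0b * (m - a 4) + a 4 * (a 1 * t1) * uq := ⟨_, rfl⟩
  have ht0Q : t0 = 1 + a 3 * (y + z) * cq := by
    rw [ht0def]; linear_combination huq
  obtain ⟨t4, ht4def⟩ : ∃ v : ℤ, v = 1 - a 1 * t1 * (a 0 * uq - lam * (m - a 4)) := ⟨_, rfl⟩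
  have hm_split : a 0 * t0 + a 4 * t4 = m := by
    rw [ht0def, ht4def]; linear_combination (m - a 4) * hs0
  have cop_e01 : IsCoprime (a 2) (a 3 * (x + y)) :=
    c23.mul_right (cop_shift hxy)
  have cop_e02 : IsCoprime (a 0) (a 3 * (x + z)) :=
    c03.mul_right (cop_shift hxz)
  have cop_e12 : IsCoprime (a 0 * t0) (a 3 * (y + z)) :=
    IsCoprime.mul_left (c03.mul_right copa0yz)
      ((cop_shift (show t0 = 1 + (a 3 * (y + z)) * cq by linear_combination ht0Q)).symm)
  have cop_e20 : IsCoprime (a 1 * t1) (a 4 * t4) := by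
    have h1 : IsCoprime (a 1 * t1) (a 4) :=
      IsCoprime.mul_left c14 copa4t1.symm
    have h2 : IsCoprime (a 1 * t1) t4 :=
      (cop_shift (show t4 = 1 + (a 1 * t1) * (-(a 0 * uq - lam * (m - a 4)))
        by rw [ht4def]; ring)).symm.symm
    exact h1.mul_right h2
  have cop_e21 : IsCoprime (a 2 * t2) (a 4) :=
    IsCoprime.mul_left c24 ((cop_shift ht2def).symm)
  obtain ⟨b1u, b1v, hb1⟩ := cop_e01
  obtain ⟨b2u, b2v, hb2⟩ := cop_e12
  obtain ⟨b3u, b3v, hb3⟩ := cop_e02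
  obtain ⟨b4u, b4v, hb4⟩ := id c15
  obtain ⟨b5u, b5v, hb5⟩ := cop_e20
  obtain ⟨b6u, b6v, hb6⟩ := cop_e21
  obtain ⟨q2, hq2⟩ : ∃ v : ℤ, v = b1u * A 0 1 := ⟨_, rfl⟩
  obtain ⟨al, hal⟩ : ∃ v : ℤ, v = b1v * A 0 1 := ⟨_, rfl⟩
  obtain ⟨p0, hp0⟩ : ∃ v : ℤ, v = b2u * A 1 2 := ⟨_, rfl⟩
  obtain ⟨ga, hga⟩ : ∃ v : ℤ, v = b2v * A 1 2 := ⟨_, rfl⟩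
  obtain ⟨q0, hq0⟩ : ∃ v : ℤ, v = b3u * (A 0 2 - a 3 * (al * ga)) := ⟨_, rfl⟩
  obtain ⟨be, hbe⟩ : ∃ v : ℤ, v = b3v * (A 0 2 - a 3 * (al * ga)) := ⟨_, rfl⟩
  obtain ⟨q1, hq1⟩ : ∃ v : ℤ, v = b4u * A 1 0 := ⟨_, rfl⟩
  obtain ⟨q5, hq5⟩ : ∃ v : ℤ, v = b4v * A 1 0 := ⟨_, rfl⟩
  obtain ⟨p1, hp1⟩ : ∃ v : ℤ, v = b5u * A 2 0 := ⟨_, rfl⟩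
  obtain ⟨q4, hq4⟩ : ∃ v : ℤ, v = b5v * A 2 0 := ⟨_, rfl⟩
  obtain ⟨p2, hp2⟩ : ∃ v : ℤ, v = b6u * A 2 1 := ⟨_, rfl⟩
  obtain ⟨p4, hp4⟩ : ∃ v : ℤ, v = b6v * A 2 1 := ⟨_, rfl⟩
  have e00 : A 0 0 = a 0 * t0 + a 2 * t2 + a 3 * (x * x) + a 4 * t4 := by
    linear_combination -hm_split - hm
  have e11 : A 1 1 = a 0 * t0 + a 1 * t1 + a 3 * (y * y) + a 4 * t4 + a 5 * t5 := by
    linear_combination -hm_split - hn_split - hm - hn - ht2 + hD - a 3 * hN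
  have e22 : A 2 2 = a 1 * t1 + a 2 * t2 + a 3 * (z * z) + a 5 * t5 := by
    linear_combination -hn_split - hn
  have e01 : A 0 1 = a 2 * q2 + a 3 * ((x + y) * al) := by
    rw [hq2, hal]; linear_combination -(A 0 1) * hb1
  have e02 : A 0 2 = a 0 * q0 + a 3 * ((x + z) * be + al * ga) := by
    rw [hq0, hbe]; linear_combination -(A 0 2 - a 3 * (al * ga)) * hb3
  have e10 : A 1 0 = a 1 * q1 + a 5 * q5 := by
    rw [hq1, hq5]; linear_combination -(A 1 0) * hb4
  have e12 : A 1 2 = a 0 * (t0 * p0) + a 3 * ((y + z) * ga) := by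
    rw [hp0, hga]; linear_combination -(A 1 2) * hb2
  have e20 : A 2 0 = a 1 * (t1 * p1) + a 4 * (t4 * q4) := by
    rw [hp1, hq4]; linear_combination -(A 2 0) * hb5
  have e21 : A 2 1 = a 2 * (t2 * p2) + a 4 * p4 := by
    rw [hp2, hp4]; linear_combination -(A 2 1) * hb6
  obtain ⟨M0, hM0⟩ : ∃ M : Matrix (Fin 3) (Fin 3) ℤ,
      M = !![0, 1, p0; t0, 0, q0; 0, 0, 0] := ⟨_, rfl⟩
  obtain ⟨M1, hM1⟩ : ∃ M : Matrix (Fin 3) (Fin 3) ℤ,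
      M = !![0, 0, 0; p1, 0, 1; q1, t1, 0] := ⟨_, rfl⟩
  obtain ⟨M2, hM2⟩ : ∃ M : Matrix (Fin 3) (Fin 3) ℤ,
      M = !![0, p2, 1; 0, 0, 0; t2, q2, 0] := ⟨_, rfl⟩
  obtain ⟨M3, hM3⟩ : ∃ M : Matrix (Fin 3) (Fin 3) ℤ,
      M = !![x, al, be; 0, y, ga; 0, 0, z] := ⟨_, rfl⟩
  obtain ⟨M4, hM4⟩ : ∃ M : Matrix (Fin 3) (Fin 3) ℤ,
      M = !![0, 1, 0; t4, 0, 0; p4, q4, 0] := ⟨_, rfl⟩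
  obtain ⟨M5, hM5⟩ : ∃ M : Matrix (Fin 3) (Fin 3) ℤ,
      M = !![0, 0, 0; 0, 0, 1; q5, t5, 0] := ⟨_, rfl⟩
  refine ⟨![M0, M1, M2, M3, M4, M5], ?_⟩
  rw [hM0, hM1, hM2, hM3, hM4, hM5,
    assemble a t0 p0 q0 p1 q1 t1 p2 q2 t2 x y z al be ga t4 p4 q4 q5 t5]
  conv_lhs => rw [Matrix.eta_fin_three A]
  rw [e00, e01, e02, e10, e11, e12, e20, e21, e22]
end

section
/- For every n ≥ 1 and every sequence of six pairwise coprime integers a₁,…,a₆, every 2n×2n integer matrix can be written as Σ_{i=1}^{6} aᵢAᵢ² with Aᵢ ∈ M_{2n}(ℤ). Hence f(2n) ≤ 6. -/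
/-!
Split a `2n × 2n` matrix into `n × n` blocks and take `A₀ = [[U, 1], [T, V]]`,
`A₁ = [[U', 1], [T', V']]` (with `a₀, a₁` odd) and the idempotents `[[1, X], [0, 0]]`,
`[[0, Y], [0, 1]]`, `[[0, 0], [Z, 1]]`, `[[1, 0], [W, 0]]`. Bézout for the coprime pairs
`(a₀, a₁)`, `(a₂, a₃)`, `(a₄, a₅)` matches the blocks `(1,1)`, `(1,2)`, `(2,1)`, and the block
`(2,2)` is left with an arbitrary `Δ` to be written as `a₀ (U² - V²) + a₁ (U'² - V'²)`.

Over a finite field of characteristic 2 every matrix `T` is a difference of squares: Frobenius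
iterates of `T` give `S` such that `T + S²` is nilpotent and commutes with the centraliser of `S`,
so it is trace-orthogonal to that centraliser and hence a commutator `S A - A S`; then
`T = (A + S)² - A²`. Lifting to `ℤ` with `U - V ≡ 1 (mod b)` gives a difference of squares
congruent to any matrix modulo `2b` for odd `b`, and splitting `Δ` by Bézout for `(a₀, a₁)` makes
one part an exact difference of squares and the other an odd matrix `2W + 1 = (W + 1)² - W²`.
-/

open Matrix

theorem Function.exists_iterate_add_self_eq {α : Type*} [Finite α] (f : α → α) (x : α) :
    ∃ m, 0 < m ∧ f^[m + m] x = f^[m] x := by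
  obtain ⟨i, j, hij, heq⟩ := Finite.exists_ne_map_eq_of_infinite (fun k : ℕ ↦ f^[k] x)
  wlog hlt : i < j generalizing i j
  · exact this j i hij.symm heq.symm (by omega)
  obtain ⟨d, hd, rfl⟩ : ∃ d, 0 < d ∧ j = d + i := ⟨j - i, by omega, by omega⟩
  have hper : ∀ c, f^[c * d + i] x = f^[i] x := by
    intro c
    induction c with
    | zero => simp
    | succ c ih => rw [add_mul, one_mul, add_comm _ d, add_assoc, iterate_add_apply, ih,
        ← iterate_add_apply, ← heq]
  obtain ⟨r, hr⟩ : ∃ r, (i + 1) * d = r + i := ⟨(i + 1) * d - i, by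
    have : i ≤ (i + 1) * d := by nlinarith
    omega⟩
  refine ⟨(i + 1) * d, by positivity, ?_⟩
  calc f^[(i + 1) * d + (i + 1) * d] x = f^[r] (f^[(i + 1) * d + i] x) := by
        rw [← iterate_add_apply]; congr 1; omega
    _ = f^[(i + 1) * d] x := by rw [hper, ← iterate_add_apply, hr]

theorem exists_pow_pow_pow_eq {M : Type*} [Monoid M] [Finite M] (p : ℕ) (x : M) :
    ∃ m, 0 < m ∧ (x ^ p ^ m) ^ p ^ m = x ^ p ^ m := by
  obtain ⟨m, hm, h⟩ := Function.exists_iterate_add_self_eq (· ^ p) x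
  refine ⟨m, hm, ?_⟩
  simpa [pow_iterate, pow_add, pow_mul] using h

theorem exists_isNilpotent_add_sq {R : Type*} [Ring R] [Finite R] [CharP R 2] (T : R) :
    ∃ S : R, IsNilpotent (T + S ^ 2) ∧ ∀ Y, Commute S Y → Commute (T + S ^ 2) Y := by
  obtain ⟨m, hm, hper⟩ := exists_pow_pow_pow_eq 2 T
  obtain ⟨k, rfl⟩ : ∃ k, m = k + 1 := ⟨m - 1, by omega⟩
  set C := T ^ 2 ^ (k + 1)
  set N := T + C
  set S := C ^ 2 ^ k + N
  have hTC : Commute T C := (Commute.refl T).pow_right _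
  have hcomm : Commute (C ^ 2 ^ k) N :=
    (hTC.symm.pow_left _).add_right ((Commute.refl C).pow_left _)
  have hN : N ^ 2 ^ (k + 1) = 0 := by
    rw [add_pow_char_pow_of_commute 2 (k + 1) hTC, hper, CharTwo.add_self_eq_zero]
  have hSsq : T + S ^ 2 = N + N ^ 2 := by
    rw [add_pow_char_of_commute 2 hcomm, ← pow_mul, ← pow_succ, hper, ← add_assoc]
  have hSpow : S ^ 2 ^ (k + 1) = C ^ 2 ^ k := by
    rw [add_pow_char_pow_of_commute 2 (k + 1) hcomm, hN, add_zero, ← pow_mul, mul_comm, pow_mul,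
      hper]
  refine ⟨S, hSsq ▸ ?_, fun Y hY ↦ hSsq ▸ ?_⟩
  · exact (Commute.self_pow N 2).isNilpotent_add ⟨_, hN⟩ (.pow_of_pos ⟨_, hN⟩ two_ne_zero)
  · have hNY : Commute N Y := by
      have := hY.sub_left (hSpow ▸ hY.pow_left (2 ^ (k + 1)))
      rwa [add_sub_cancel_left] at this
    exact hNY.add_left (hNY.pow_left 2)

theorem Matrix.exists_mul_sub_mul_eq_of_trace_mul_eq_zero {n K : Type*} [Fintype n] [DecidableEq n]
    [Field K] (S X : Matrix n n K) (hX : ∀ Y, Commute S Y → (X * Y).trace = 0) :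
    ∃ A, S * A - A * S = X := by
  let B : Matrix n n K →ₗ[K] Module.Dual K (Matrix n n K) :=
    (LinearMap.mul K (Matrix n n K)).compr₂ (traceLinearMap n K K)
  have hBinj : Function.Injective B := by
    refine (injective_iff_map_eq_zero B).2 fun Z hZ ↦ (ext_iff_trace_mul_right).2 fun Y ↦ ?_
    simpa [B] using LinearMap.congr_fun hZ Y
  have hBsurj : Function.Surjective B :=
    (LinearMap.injective_iff_surjective_of_finrank_eq_finrank
      Subspace.dual_finrank_eq.symm).1 hBinj
  let ad : Matrix n n K →ₗ[K] Matrix n n K := LinearMap.mulLeft K S - LinearMap.mulRight K S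
  have hker : B X ∈ (LinearMap.ker ad).dualAnnihilator := by
    exact (Submodule.mem_dualAnnihilator _).2 fun Y hY ↦ hX Y (sub_eq_zero.1 hY)
  rw [← LinearMap.range_dualMap_eq_dualAnnihilator_ker] at hker
  obtain ⟨g, hg⟩ := hker
  obtain ⟨Z, rfl⟩ := hBsurj g
  refine ⟨-Z, hBinj (LinearMap.ext fun Y ↦ ?_)⟩
  rw [← hg]
  simp only [B, ad, LinearMap.dualMap_apply, LinearMap.compr₂_apply, LinearMap.mul_apply',
    traceLinearMap_apply, LinearMap.sub_apply, LinearMap.mulLeft_apply, LinearMap.mulRight_apply]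
  rw [mul_sub, trace_sub, ← mul_assoc, ← mul_assoc, trace_mul_cycle Z Y S]
  simp only [mul_neg, sub_neg_eq_add, add_mul, neg_mul, trace_add, trace_neg]
  abel

theorem Matrix.exists_eq_mul_self_sub_mul_self {n K : Type*} [Fintype n] [DecidableEq n]
    [Field K] [Finite K] [CharP K 2] (T : Matrix n n K) : ∃ U V, T = U * U - V * V := by
  cases isEmpty_or_nonempty n
  · exact ⟨0, 0, Subsingleton.elim _ _⟩
  obtain ⟨S, hnil, hcomm⟩ := exists_isNilpotent_add_sq T
  obtain ⟨A, hA⟩ := exists_mul_sub_mul_eq_of_trace_mul_eq_zero S (T + S ^ 2) fun Y hY ↦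
    (isNilpotent_trace_of_isNilpotent ((hcomm Y hY).isNilpotent_mul_right hnil)).eq_zero
  refine ⟨A + S, A, ?_⟩
  have hT : T = S * A - A * S - S ^ 2 := by rw [hA]; abel
  rw [hT, ← sub_eq_zero]
  noncomm_ring
  simp [CharTwo.two_eq_zero]

theorem Matrix.exists_eq_smul_of_mapMatrix_intCast_eq_zero {n : Type*} [Fintype n]
    [DecidableEq n] (N : ℕ) (E : Matrix n n ℤ) (h : (Int.castRingHom (ZMod N)).mapMatrix E = 0) :
    ∃ G, E = (N : ℤ) • G := by
  refine ⟨of fun i j ↦ E i j / N, ext fun i j ↦ ?_⟩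
  have hdvd : (N : ℤ) ∣ E i j := (ZMod.intCast_zmod_eq_zero_iff_dvd _ N).1 (congr_fun₂ h i j)
  simp [Int.mul_ediv_cancel' hdvd]

theorem Matrix.exists_eq_mul_self_sub_mul_self_add_two_smul {n : Type*} [Fintype n]
    [DecidableEq n] (Y : Matrix n n ℤ) : ∃ U V E, Y = U * U - V * V + (2 : ℤ) • E := by
  let ρ := (Int.castRingHom (ZMod 2)).mapMatrix (m := n)
  have hρ : Function.Surjective ρ := fun P ↦
    ⟨P.map (fun z ↦ (z.cast : ℤ)), ext fun i j ↦ ZMod.intCast_zmod_cast (P i j)⟩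
  obtain ⟨U', V', hUV'⟩ := exists_eq_mul_self_sub_mul_self (ρ Y)
  obtain ⟨U, rfl⟩ := hρ U'
  obtain ⟨V, rfl⟩ := hρ V'
  obtain ⟨E, hE⟩ := exists_eq_smul_of_mapMatrix_intCast_eq_zero 2 (Y - (U * U - V * V))
    (by rw [map_sub, map_sub, map_mul, map_mul, hUV', sub_self])
  exact ⟨U, V, E, by simpa using sub_eq_iff_eq_add'.1 hE⟩

theorem exists_mul_add_mul_eq_add_smul {R : Type*} [Ring R] {b : ℤ} (hb : Odd b) (D G : R) :
    ∃ W K : R, W * (1 + b • D) + (1 + b • D) * W = G + b • K := by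
  obtain ⟨m, rfl⟩ := hb
  refine ⟨(m + 1) • G, G + (m + 1) • (G * D + D * G), ?_⟩
  simp only [smul_mul_assoc, mul_smul_comm, mul_add, add_mul, mul_one, one_mul, smul_add, smul_smul]
  module

theorem Matrix.exists_mul_self_sub_mul_self_eq_add_smul {n : Type*} [Fintype n] [DecidableEq n]
    {b : ℤ} (hb : Odd b) (Y : Matrix n n ℤ) :
    ∃ U V K : Matrix n n ℤ, U * U - V * V = Y + (2 * b) • K := by
  obtain ⟨U₀, V₀, E, rfl⟩ := exists_eq_mul_self_sub_mul_self_add_two_smul Y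
  obtain ⟨D, rfl⟩ : ∃ D, U₀ = V₀ + D + 1 := ⟨U₀ - V₀ - 1, by abel⟩
  -- `C ≡ D + 1 (mod 2)`, and `C ≡ 1 (mod b)` makes `W ↦ W * C + C * W` onto modulo `b`
  set C := 1 + b • D
  obtain ⟨m, rfl⟩ := hb
  set G := -E + m • (V₀ * D + D * V₀) + (2 * m) • D + (2 * m * (m + 1)) • (D * D)
  have hG : V₀ * C + C * V₀ + C * C =
      (V₀ + D + 1) * (V₀ + D + 1) - V₀ * V₀ + (2 : ℤ) • E + (2 : ℤ) • G := by
    simp only [C, G, smul_mul_assoc, mul_smul_comm, mul_add, add_mul, mul_one, one_mul, smul_add,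
      smul_smul, smul_neg]
    module
  obtain ⟨W, K, hWK⟩ := exists_mul_add_mul_eq_add_smul ⟨m, rfl⟩ D (-G)
  refine ⟨V₀ + (2 : ℤ) • W + C, V₀ + (2 : ℤ) • W, K, ?_⟩
  calc (V₀ + (2 : ℤ) • W + C) * (V₀ + (2 : ℤ) • W + C) - (V₀ + (2 : ℤ) • W) * (V₀ + (2 : ℤ) • W)
      = V₀ * C + C * V₀ + C * C + (2 : ℤ) • (W * C + C * W) := by
        simp only [smul_mul_assoc, mul_smul_comm, mul_add, add_mul, smul_add]
        abel
    _ = _ := by rw [hG, hWK]; module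

theorem Matrix.exists_smul_sub_add_smul_sub_eq {n : Type*} [Fintype n] [DecidableEq n]
    {b₀ b₁ : ℤ} (h₀ : Odd b₀) (h₁ : Odd b₁) (hco : IsCoprime b₀ b₁) (Δ : Matrix n n ℤ) :
    ∃ U V U' V' : Matrix n n ℤ, b₀ • (U * U - V * V) + b₁ • (U' * U' - V' * V') = Δ := by
  obtain ⟨u, v, huv⟩ := hco
  -- `Δ = b₀ • (u • Δ + b₁ • K') + b₁ • (v • Δ - b₀ • K')` for every `K'`; with
  -- `K' = u • Δ + 1 - 2 • K` the second summand is `U * U - V * V` and the first is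
  -- `2 • W + 1 = (W + 1) * (W + 1) - W * W`
  obtain ⟨U, V, K, hUV⟩ := exists_mul_self_sub_mul_self_eq_add_smul h₀ (v • Δ - b₀ • (u • Δ + 1))
  obtain ⟨c, rfl⟩ := h₁
  set W := ((c + 1) * u) • Δ + c • (1 : Matrix n n ℤ) - (2 * c + 1) • K
  refine ⟨W + 1, W, U, V, ?_⟩
  rw [hUV]
  simp only [W, add_mul, mul_add, mul_one, one_mul, sub_mul, mul_sub, smul_mul_assoc, mul_smul_comm]
  linear_combination (norm := module) huv • Δ

theorem IsCoprime.exists_smul_add_smul_eq {R M : Type*} [CommSemiring R] [AddCommMonoid M]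
    [Module R M] {a b : R} (h : IsCoprime a b) (x : M) : ∃ p q : M, a • p + b • q = x := by
  obtain ⟨u, v, huv⟩ := h
  exact ⟨u • x, v • x, by rw [smul_smul, smul_smul, ← add_smul, mul_comm a, mul_comm b, huv,
    one_smul]⟩

theorem Matrix.exists_eq_sum_smul_sq_of_isCoprime {R n : Type*} [CommRing R] [Fintype n]
    [DecidableEq n] (b : Fin 6 → R)
    (hdiff : ∀ Δ : Matrix n n R, ∃ U V U' V' : Matrix n n R,
      b 0 • (U * U - V * V) + b 1 • (U' * U' - V' * V') = Δ)
    (h01 : IsCoprime (b 0) (b 1)) (h23 : IsCoprime (b 2) (b 3)) (h45 : IsCoprime (b 4) (b 5))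
    (M : Matrix (n ⊕ n) (n ⊕ n) R) :
    ∃ A : Fin 6 → Matrix (n ⊕ n) (n ⊕ n) R, M = ∑ i, b i • A i ^ 2 := by
  obtain ⟨U, V, U', V', hΔ⟩ := hdiff (M.toBlocks₁₁ - M.toBlocks₂₂ - (b 2 + b 5 - b 3 - b 4) • 1)
  obtain ⟨T, T', hT⟩ := h01.exists_smul_add_smul_eq
    (M.toBlocks₁₁ - (b 2 + b 5) • 1 - b 0 • (U * U) - b 1 • (U' * U'))
  obtain ⟨X, Y, hXY⟩ := h23.exists_smul_add_smul_eq
    (M.toBlocks₁₂ - b 0 • (U + V) - b 1 • (U' + V'))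
  obtain ⟨Z, W, hZW⟩ := h45.exists_smul_add_smul_eq
    (M.toBlocks₂₁ - b 0 • (T * U + V * T) - b 1 • (T' * U' + V' * T'))
  refine ⟨![fromBlocks U 1 T V, fromBlocks U' 1 T' V', fromBlocks 1 X 0 0, fromBlocks 0 Y 0 1,
    fromBlocks 0 0 Z 1, fromBlocks 1 0 W 0], ?_⟩
  conv_lhs => rw [← fromBlocks_toBlocks M]
  simp only [Fin.sum_univ_six, Matrix.cons_val, sq, fromBlocks_multiply,
    fromBlocks_smul, fromBlocks_add, fromBlocks_inj, mul_one, one_mul, mul_zero, zero_mul, add_zero,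
    zero_add]
  refine ⟨?_, ?_, ?_, ?_⟩
  · linear_combination (norm := module) -hT
  · linear_combination (norm := module) -hXY
  · linear_combination (norm := module) -hZW
  · linear_combination (norm := module) hΔ - hT

theorem Int.odd_of_isCoprime_of_even {x y : ℤ} (h : IsCoprime x y) (hx : Even x) : Odd y := by
  rw [← Int.not_even_iff_odd]
  intro hy
  simpa [Int.isUnit_iff] using h.isUnit_of_dvd' hx.two_dvd hy.two_dvd

theorem exists_perm_odd_apply_zero_odd_apply_one (a : Fin 6 → ℤ)
    (hco : ∀ i j, i ≠ j → IsCoprime (a i) (a j)) :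
    ∃ σ : Equiv.Perm (Fin 6), Odd (a (σ 0)) ∧ Odd (a (σ 1)) := by
  have hodd {i j : Fin 6} (hij : i ≠ j) : Even (a i) → Odd (a j) :=
    Int.odd_of_isCoprime_of_even (hco i j hij)
  rcases Int.even_or_odd (a 0) with h0 | h0
  · refine ⟨Equiv.swap 0 2, ?_, ?_⟩
    · rw [Equiv.swap_apply_left]; exact hodd (by decide) h0
    · rw [Equiv.swap_apply_of_ne_of_ne (by decide) (by decide)]; exact hodd (by decide) h0
  rcases Int.even_or_odd (a 1) with h1 | h1
  · refine ⟨Equiv.swap 1 2, ?_, ?_⟩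
    · rwa [Equiv.swap_apply_of_ne_of_ne (by decide) (by decide)]
    · rw [Equiv.swap_apply_left]; exact hodd (by decide) h1
  · exact ⟨1, h0, h1⟩

theorem stmt15_general (n : ℕ) (a : Fin 6 → ℤ)
    (hco : ∀ i j, i ≠ j → IsCoprime (a i) (a j)) :
    ∀ M : Matrix (Fin (2 * n)) (Fin (2 * n)) ℤ,
      ∃ A : Fin 6 → Matrix (Fin (2 * n)) (Fin (2 * n)) ℤ, M = ∑ i, a i • (A i) ^ 2 := by
  intro M
  obtain ⟨σ, h0, h1⟩ := exists_perm_odd_apply_zero_odd_apply_one a hco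
  have hcoσ (i j : Fin 6) (hij : i ≠ j) : IsCoprime (a (σ i)) (a (σ j)) :=
    hco _ _ (σ.injective.ne hij)
  let F := reindexAlgEquiv ℤ ℤ (finSumFinEquiv.trans (finCongr (two_mul n).symm))
  obtain ⟨B, hB⟩ := exists_eq_sum_smul_sq_of_isCoprime (a ∘ σ)
    (exists_smul_sub_add_smul_sub_eq h0 h1 (hcoσ 0 1 (by decide)))
    (hcoσ 0 1 (by decide)) (hcoσ 2 3 (by decide)) (hcoσ 4 5 (by decide)) (F.symm M)
  refine ⟨fun j ↦ F (B (σ.symm j)), ?_⟩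
  rw [← F.apply_symm_apply M, hB, map_sum,
    ← Equiv.sum_comp σ fun j ↦ a j • F (B (σ.symm j)) ^ 2]
  simp [map_pow]

theorem stmt15 (n : ℕ) (hn : 1 ≤ n) (a : Fin 6 → ℤ)
    (hco : ∀ i j, i ≠ j → IsCoprime (a i) (a j)) :
    ∀ M : Matrix (Fin (2 * n)) (Fin (2 * n)) ℤ,
      ∃ A : Fin 6 → Matrix (Fin (2 * n)) (Fin (2 * n)) ℤ, M = ∑ i, a i • (A i) ^ 2 :=
  stmt15_general n a hco
end
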